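/- arXiv:math/0701324 — 3 statements merged into one kernel-verified Lean document; each statement's English description precedes it below -/
import Mathlib

section
/- Let Z be a Banach space with an FDD (E_i), let B_i ⊆ S_Z for each i ∈ ℕ and put B = ∏_{i=1}^∞ B_i, and let A ⊆ S_Z^ω. Assume that for every sequence ε̄ = (ε_i) ⊂ (0,1], Player I has a winning strategy WI(cl(A_ε̄), B), where cl denotes closure in the product of the discrete topology on S_Z. Then for every sequence ε̄ = (ε_i) ⊂ (0,1] there exists a blocking (G_i) of (E_i) such that every skipped block sequence (z_i) of (G_i) with z_i ∈ B_i for all i lies in cl(A_ε̄). -/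
/-! Common definitions for formalizing results of
E. Odell and Th. Schlumprecht,
"Embedding into Banach spaces with finite dimensional decompositions". -/

open Filter Topology
open scoped ENNReal NNReal

noncomputable section

namespace OS

/-! ### ℓ_p-type sums (with the sup-interpretation at `p = ∞`) -/

noncomputable def lpSumOn (p : ℝ≥0∞) {ι : Type*} (s : Finset ι) (r : ι → ℝ) : ℝ :=
  if p = ⊤ then ⨆ i ∈ s, |r i|
  else (∑ i ∈ s, |r i| ^ p.toReal) ^ (1 / p.toReal)

noncomputable def lpNormSeq (p : ℝ≥0∞) (r : ℕ → ℝ) : ℝ≥0∞ :=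
  if p = ⊤ then ⨆ i, ENNReal.ofReal |r i|
  else (∑' i, ENNReal.ofReal |r i| ^ p.toReal) ^ (1 / p.toReal)

noncomputable def lp2 (p : ℝ≥0∞) (s t : ℝ) : ℝ :=
  if p = ⊤ then max s t else (|s| ^ p.toReal + |t| ^ p.toReal) ^ (1 / p.toReal)

/-- a null sequence contained in `(0,1]` -/
def NullSeq01 (ε : ℕ → ℝ) : Prop :=
  (∀ i, 0 < ε i ∧ ε i ≤ 1) ∧ Tendsto ε atTop (𝓝 0)

/-- a sequence contained in `(0,1]` -/
def Seq01 (ε : ℕ → ℝ) : Prop := ∀ i, 0 < ε i ∧ ε i ≤ 1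

/-- `N` encodes a blocking of an FDD:  the `i`-th block of the blocking is
spanned by `E_j`, `N i ≤ j < N (i+1)` (everything 0-indexed). -/
def IsBlockingSeq (N : ℕ → ℕ) : Prop := N 0 = 0 ∧ StrictMono N

section Space

variable {Z : Type*} [NormedAddCommGroup Z] [NormedSpace ℝ Z]

/-! ### Finite dimensional decompositions -/

/-- `E` is a finite dimensional decomposition of `Z`:  every `z` has a unique
norm-convergent representation `z = ∑ zᵢ` with `zᵢ ∈ E i`. -/
structure IsFDD (E : ℕ → Submodule ℝ Z) : Prop where
  finiteDim : ∀ i, FiniteDimensional ℝ (E i)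
  nonzero : ∀ i, E i ≠ ⊥
  rep : ∀ z : Z, ∃! f : ℕ → Z, (∀ i, f i ∈ E i) ∧
    Tendsto (fun n => ∑ i ∈ Finset.range n, f i) atTop (𝓝 z)

namespace IsFDD

variable {E : ℕ → Submodule ℝ Z}

/-- the coordinates of `z` with respect to the FDD -/
def coord (h : IsFDD E) (z : Z) : ℕ → Z := (h.rep z).exists.choose

/-- the coordinate projection `P^E_I` -/
def proj (h : IsFDD E) (I : Finset ℕ) (z : Z) : Z := ∑ i ∈ I, h.coord z i

/-- the support `supp_E z` -/
def suppE (h : IsFDD E) (z : Z) : Set ℕ := {i | h.coord z i ≠ 0}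

/-- `z ∈ c₀₀(⊕ Eᵢ)` -/
def FinSupp (h : IsFDD E) (z : Z) : Prop := (h.suppE z).Finite

/-- the projection constant of the FDD is at most `K` -/
def ProjBound (h : IsFDD E) (K : ℝ) : Prop :=
  ∀ (m n : ℕ) (z : Z), ‖h.proj (Finset.Icc m n) z‖ ≤ K * ‖z‖

/-- `z` is a block sequence of `(Eᵢ)` -/
def IsBlockSeq (h : IsFDD E) (z : ℕ → Z) : Prop :=
  (∀ n, z n ≠ 0 ∧ h.FinSupp (z n)) ∧
  ∀ n, ∀ i ∈ h.suppE (z n), ∀ j ∈ h.suppE (z (n + 1)), i < j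

/-- `z` is a skipped block sequence of `(Eᵢ)` -/
def IsSkippedBlockSeq (h : IsFDD E) (z : ℕ → Z) : Prop :=
  (∀ n, z n ≠ 0 ∧ h.FinSupp (z n)) ∧
  (∀ i ∈ h.suppE (z 0), 0 < i) ∧
  ∀ n, ∀ i ∈ h.suppE (z n), ∀ j ∈ h.suppE (z (n + 1)), i + 1 < j

/-- `z` is a skipped block sequence of the blocking `Gᵢ = ⊕_{j ∈ [N i, N (i+1))} E_j`. -/
def IsSkippedBlockOfBlocking (h : IsFDD E) (N : ℕ → ℕ) (z : ℕ → Z) : Prop :=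
  (∀ n, z n ≠ 0 ∧ h.FinSupp (z n)) ∧
  ∃ a b : ℕ → ℕ, 0 < a 0 ∧ (∀ n, a n ≤ b n) ∧ (∀ n, b n + 1 < a (n + 1)) ∧
    ∀ n, h.suppE (z n) ⊆ Set.Ico (N (a n)) (N (b n + 1))

/-- `z` is a (normalized) `δ`-skipped block sequence of the blocking of `E` given by `N`. -/
def IsDeltaSkippedOfBlocking (h : IsFDD E) (N : ℕ → ℕ) (δ : ℕ → ℝ) (z : ℕ → Z) : Prop :=
  (∀ n, ‖z n‖ = 1) ∧
  ∃ k l : ℕ → ℕ, (∀ n, k n < l n) ∧ (∀ n, l n < k (n + 1)) ∧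
    ∀ n, ‖z n - h.proj (Finset.Ico (N (k n + 1)) (N (l n + 1))) (z n)‖ < δ n

/-- the FDD is shrinking:  every normalized block sequence is weakly null -/
def Shrinking (h : IsFDD E) : Prop :=
  ∀ z : ℕ → Z, h.IsBlockSeq z → (∀ n, ‖z n‖ = 1) →
    ∀ f : Z →L[ℝ] ℝ, Tendsto (fun n => f (z n)) atTop (𝓝 0)

/-- the FDD is boundedly complete (so that `Z = (Z^{(*)})^*`) -/
def BoundedlyComplete (h : IsFDD E) : Prop :=
  ∀ z : ℕ → Z, (∀ n, z n ∈ E n) →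
    (∃ M : ℝ, ∀ n, ‖∑ i ∈ Finset.range n, z i‖ ≤ M) →
    ∃ w : Z, Tendsto (fun n => ∑ i ∈ Finset.range n, z i) atTop (𝓝 w)

/-- (sequential) w*-convergence in `Z = (Z^{(*)})^*`:  for bounded sequences this is
coordinatewise convergence. -/
def WStarTendsto (h : IsFDD E) (z : ℕ → Z) (w : Z) : Prop :=
  (∃ M : ℝ, ∀ n, ‖z n‖ ≤ M) ∧
  ∀ i, Tendsto (fun n => h.coord (z n) i) atTop (𝓝 (h.coord w i))

/-- the unit ball of the subspace `X` is a w*-closed subset of `Z = (Z^{(*)})^*` -/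
def BallWStarClosed (h : IsFDD E) (X : Submodule ℝ Z) : Prop :=
  ∀ (z : ℕ → Z) (w : Z), (∀ n, z n ∈ X ∧ ‖z n‖ ≤ 1) → h.WStarTendsto z w →
    w ∈ X ∧ ‖w‖ ≤ 1

/-- `S` is a w*-closed subset of `Z = (Z^{(*)})^*` (sequentially) -/
def WStarClosedSet (h : IsFDD E) (S : Set Z) : Prop :=
  ∀ (z : ℕ → Z) (w : Z), (∀ n, z n ∈ S) → h.WStarTendsto z w → w ∈ S

/-- `(⊕_{i ≥ n} Eᵢ)_Z`, i.e. the vectors whose first `n` coordinates vanish -/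
def tail (h : IsFDD E) (n : ℕ) : Set Z := {z : Z | ∀ i < n, h.coord z i = 0}

/-- Condition (2.4.1) of Odell–Schlumprecht, with constant `C`.  Here
`X_m = X ∩ (⊕_{i ≥ m} Eᵢ)_Z` and `‖x‖_{X/X_m} = dist (x, X_m)`. -/
def Cond241 (h : IsFDD E) (X : Submodule ℝ Z) (C : ℝ) : Prop :=
  ∀ (m : ℕ) (ε : ℝ), 0 < ε → ∃ n, m ≤ n ∧ ∀ x ∈ X, ‖x‖ = (1 : ℝ) →
    Metric.infDist x ((X : Set Z) ∩ h.tail m) ≤ C * (‖h.proj (Finset.range n) x‖ + ε)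

/-- the FDD satisfies `C`-`(p,q)` estimates -/
def PQEstimates (h : IsFDD E) (p q : ℝ≥0∞) (C : ℝ) : Prop :=
  ∀ (n : ℕ) (x : ℕ → Z),
    (∀ i < n, x i ≠ 0 ∧ h.FinSupp (x i)) →
    (∀ i j, i < j → j < n → ∀ a ∈ h.suppE (x i), ∀ b ∈ h.suppE (x j), a < b) →
    C⁻¹ * lpSumOn p (Finset.range n) (fun i => ‖x i‖) ≤ ‖∑ i ∈ Finset.range n, x i‖ ∧
      ‖∑ i ∈ Finset.range n, x i‖ ≤ C * lpSumOn q (Finset.range n) (fun i => ‖x i‖)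

/-- the FDD is an asymptotic `ℓ_p` FDD -/
def AsymptoticLpFDD (h : IsFDD E) (p : ℝ≥0∞) : Prop :=
  ∃ C : ℝ, 1 ≤ C ∧ ∀ (n : ℕ) (x : ℕ → Z),
    (∀ i < n, h.FinSupp (x i) ∧ ‖x i‖ = 1) →
    (∀ i j, i < j → j < n → ∀ a ∈ h.suppE (x i), ∀ b ∈ h.suppE (x j), a < b) →
    (∀ j ∈ h.suppE (x 0), n ≤ j + 1) →
    ∀ a : ℕ → ℝ,
      C⁻¹ * lpSumOn p (Finset.range n) a ≤ ‖∑ i ∈ Finset.range n, a i • x i‖ ∧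
      ‖∑ i ∈ Finset.range n, a i • x i‖ ≤ C * lpSumOn p (Finset.range n) a

/-- the norm of `Z_p(F)`, where `F` is the blocking of `E` given by `N` -/
noncomputable def ZpNorm (h : IsFDD E) (p : ℝ≥0∞) (N : ℕ → ℕ) (z : Z) : ℝ≥0∞ :=
  ⨆ m : {m : ℕ → ℕ // IsBlockingSeq m},
    lpNormSeq p fun j => ‖h.proj (Finset.Ico (N (m.1 j)) (N (m.1 (j + 1)))) z‖

end IsFDD

/-! ### Trees indexed by `T_∞` (finite strictly increasing lists of naturals) -/

/-- the branch of the tree `x` along the strictly increasing sequence `φ`: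
`branchOf x φ i = x_{(φ 0, …, φ i)}` -/
def branchOf {X : Type*} (x : List ℕ → X) (φ : ℕ → ℕ) (i : ℕ) : X :=
  x ((List.range (i + 1)).map φ)

/-- all entries of the tree lie in the unit sphere -/
def TreeInSphere {X : Type*} [NormedAddCommGroup X] (x : List ℕ → X) : Prop :=
  ∀ l : List ℕ, l.Chain' (· < ·) → l ≠ [] → ‖x l‖ = 1

/-- the tree is weakly null:  every node converges weakly to `0` -/
def IsWeaklyNullTree {X : Type*} [NormedAddCommGroup X] [NormedSpace ℝ X]
    (x : List ℕ → X) : Prop :=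
  ∀ l : List ℕ, l.Chain' (· < ·) → ∀ f : X →L[ℝ] ℝ,
    Tendsto (fun n => f (x (l ++ [n]))) atTop (𝓝 0)

/-- a tree in a dual space is w*-null: every node converges pointwise to `0` -/
def IsWStarNullDualTree {X : Type*} [NormedAddCommGroup X] [NormedSpace ℝ X]
    (x : List ℕ → (X →L[ℝ] ℝ)) : Prop :=
  ∀ l : List ℕ, l.Chain' (· < ·) → ∀ v : X,
    Tendsto (fun n => x (l ++ [n]) v) atTop (𝓝 0)

/-- a block tree of the FDD:  every node is a block sequence of `(Eᵢ)` -/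
def IsBlockTree {E : ℕ → Submodule ℝ Z} (h : IsFDD E) (x : List ℕ → Z) : Prop :=
  (∀ l : List ℕ, l.Chain' (· < ·) → l ≠ [] → x l ≠ 0 ∧ h.FinSupp (x l)) ∧
  ∀ (l : List ℕ) (m n : ℕ), (l ++ [m]).Chain' (· < ·) → m < n →
    ∀ i ∈ h.suppE (x (l ++ [m])), ∀ j ∈ h.suppE (x (l ++ [n])), i < j

/-- a w*-null tree in `Z = (Z^{(*)})^*`:  every node converges coordinatewise to `0` -/
def IsWStarNullTree {E : ℕ → Submodule ℝ Z} (h : IsFDD E) (x : List ℕ → Z) : Prop :=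
  ∀ l : List ℕ, l.Chain' (· < ·) → ∀ i : ℕ,
    Tendsto (fun n => h.coord (x (l ++ [n])) i) atTop (𝓝 0)

/-! ### Sets of sequences, fattenings, closures -/

/-- the `ε`-fattening `A_ε` of `A` inside `S_Z^ω` -/
def fatten (A : Set (ℕ → Z)) (ε : ℕ → ℝ) : Set (ℕ → Z) :=
  {z | (∀ i, ‖z i‖ = 1) ∧ ∃ y ∈ A, ∀ i, ‖z i - y i‖ ≤ ε i}

/-- the fattening `A^X_ε = A_ε ∩ S_X^ω` -/
def fattenIn (X : Submodule ℝ Z) (A : Set (ℕ → Z)) (ε : ℕ → ℝ) : Set (ℕ → Z) :=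
  fatten A ε ∩ {z | ∀ i, z i ∈ X}

/-- closure in the product of the discrete topology -/
def discClosure {W : Type*} (A : Set (ℕ → W)) : Set (ℕ → W) :=
  {z | ∀ n : ℕ, ∃ y ∈ A, ∀ i < n, y i = z i}

/-! ### Games -/

/-- Player I has a winning strategy in the `(A, B)`-game (for the determined games we
consider):  every block tree of `(Eᵢ)` in `S_Z` all of whose branches lie in
`∏ᵢ B i` has a branch in `A`. -/
def WIGameFDD {E : ℕ → Submodule ℝ Z} (h : IsFDD E)
    (A : Set (ℕ → Z)) (B : ℕ → Set Z) : Prop :=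
  ∀ x : List ℕ → Z, IsBlockTree h x → TreeInSphere x →
    (∀ φ : ℕ → ℕ, StrictMono φ → ∀ i, branchOf x φ i ∈ B i) →
    ∃ φ : ℕ → ℕ, StrictMono φ ∧ branchOf x φ ∈ A

/-- Player I has a winning strategy in the `(A, Z)`-game for the subspace `X ⊆ Z`:
every tree in `S_X` with `x_{(α,n)} ∈ X_n = X ∩ (⊕_{i ≥ n} Eᵢ)_Z` has a branch in `A`. -/
def WIGameSub {E : ℕ → Submodule ℝ Z} (h : IsFDD E) (X : Submodule ℝ Z)
    (A : Set (ℕ → Z)) : Prop :=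
  ∀ x : List ℕ → Z,
    (∀ l : List ℕ, l.Chain' (· < ·) → l ≠ [] → x l ∈ X ∧ ‖x l‖ = 1) →
    (∀ (l : List ℕ) (n : ℕ), (l ++ [n]).Chain' (· < ·) → x (l ++ [n]) ∈ h.tail n) →
    ∃ φ : ℕ → ℕ, StrictMono φ ∧ branchOf x φ ∈ A

/-- Player I has a winning strategy for the game where Player I may only play the
subspaces `Y n`. -/
def WIGameYFam (X : Submodule ℝ Z) (Y : ℕ → Submodule ℝ Z) (A : Set (ℕ → Z)) : Prop :=
  ∀ x : List ℕ → Z,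
    (∀ l : List ℕ, l.Chain' (· < ·) → l ≠ [] → x l ∈ X ∧ ‖x l‖ = 1) →
    (∀ (l : List ℕ) (n : ℕ), (l ++ [n]).Chain' (· < ·) → x (l ++ [n]) ∈ Y n) →
    ∃ φ : ℕ → ℕ, StrictMono φ ∧ branchOf x φ ∈ A

end Space

/-- the closed finite codimensional subspaces of `X` -/
def cofSub (X : Type*) [NormedAddCommGroup X] [NormedSpace ℝ X] : Set (Submodule ℝ X) :=
  {Y | IsClosed (Y : Set X) ∧ FiniteDimensional ℝ (X ⧸ Y)}

section Space2

variable {Z : Type*} [NormedAddCommGroup Z] [NormedSpace ℝ Z]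

/-- the closed subspaces of `X` of finite codimension in `X` -/
def cofSubIn (X : Submodule ℝ Z) : Set (Submodule ℝ Z) :=
  {Y | Y ≤ X ∧ IsClosed (Y : Set Z) ∧
    ∃ F : Submodule ℝ Z, FiniteDimensional ℝ F ∧ Y ⊔ F = X}

/-- Player I has a winning strategy in the coordinate-free `A`-game on the subspace `X`:
Player I plays closed finite codimensional subspaces of `X`, Player II picks
norm-one vectors in them, and Player I wins if the resulting sequence lies in `A`. -/
def WIGameCofSub (X : Submodule ℝ Z) (A : Set (ℕ → Z)) : Prop :=
  ∃ σ : List Z → Submodule ℝ Z, (∀ lst, σ lst ∈ cofSubIn X) ∧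
    ∀ x : ℕ → Z, (∀ k, x k ∈ σ (List.ofFn fun i : Fin k => x i) ∧ ‖x k‖ = 1) → x ∈ A

/-- `X` (as a subspace of `Z`) satisfies `C`-`(p,1)`-w*-tree estimates -/
def SubTreeLowerWStarEst {E : ℕ → Submodule ℝ Z} (h : IsFDD E) (X : Submodule ℝ Z)
    (p : ℝ≥0∞) (C : ℝ) : Prop :=
  ∀ x : List ℕ → Z, (∀ l : List ℕ, l.Chain' (· < ·) → l ≠ [] → x l ∈ X ∧ ‖x l‖ = 1) →
    IsWStarNullTree h x →
    ∃ φ : ℕ → ℕ, StrictMono φ ∧ ∀ (s : Finset ℕ) (a : ℕ → ℝ),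
      C⁻¹ * lpSumOn p s a ≤ ‖∑ i ∈ s, a i • branchOf x φ i‖

end Space2

/-! ### Tree estimates -/

section TreeEst

variable (X : Type*) [NormedAddCommGroup X] [NormedSpace ℝ X]

/-- every weakly null tree in `S_X` has a branch `C`-dominating the `ℓ_p` unit vector basis -/
def TreeLowerEst (p : ℝ≥0∞) (C : ℝ) : Prop :=
  ∀ x : List ℕ → X, TreeInSphere x → IsWeaklyNullTree x →
    ∃ φ : ℕ → ℕ, StrictMono φ ∧ ∀ (s : Finset ℕ) (a : ℕ → ℝ),
      C⁻¹ * lpSumOn p s a ≤ ‖∑ i ∈ s, a i • branchOf x φ i‖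

/-- every weakly null tree in `S_X` has a branch `C`-dominated by the `ℓ_q` unit vector basis -/
def TreeUpperEst (q : ℝ≥0∞) (C : ℝ) : Prop :=
  ∀ x : List ℕ → X, TreeInSphere x → IsWeaklyNullTree x →
    ∃ φ : ℕ → ℕ, StrictMono φ ∧ ∀ (s : Finset ℕ) (a : ℕ → ℝ),
      ‖∑ i ∈ s, a i • branchOf x φ i‖ ≤ C * lpSumOn q s a

/-- `X` satisfies `C`-`(p,q)`-tree estimates -/
def TreePQEst (p q : ℝ≥0∞) (C : ℝ) : Prop :=
  ∀ x : List ℕ → X, TreeInSphere x → IsWeaklyNullTree x →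
    (∃ φ : ℕ → ℕ, StrictMono φ ∧ ∀ (s : Finset ℕ) (a : ℕ → ℝ),
      C⁻¹ * lpSumOn p s a ≤ ‖∑ i ∈ s, a i • branchOf x φ i‖) ∧
    (∃ φ : ℕ → ℕ, StrictMono φ ∧ ∀ (s : Finset ℕ) (a : ℕ → ℝ),
      ‖∑ i ∈ s, a i • branchOf x φ i‖ ≤ C * lpSumOn q s a)

/-- `X^*` satisfies `C`-`(p,1)`-w*-tree estimates -/
def DualTreeLowerWStarEst (p : ℝ≥0∞) (C : ℝ) : Prop :=
  ∀ x : List ℕ → (X →L[ℝ] ℝ), TreeInSphere x → IsWStarNullDualTree x →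
    ∃ φ : ℕ → ℕ, StrictMono φ ∧ ∀ (s : Finset ℕ) (a : ℕ → ℝ),
      C⁻¹ * lpSumOn p s a ≤ ‖∑ i ∈ s, a i • branchOf x φ i‖

end TreeEst

/-! ### Embeddings, quotients, reflexivity -/

def IsIsoEmbedding {X Y : Type*} [NormedAddCommGroup X] [NormedSpace ℝ X]
    [NormedAddCommGroup Y] [NormedSpace ℝ Y] (T : X →L[ℝ] Y) : Prop :=
  ∃ c : ℝ, 0 < c ∧ ∀ x : X, c * ‖x‖ ≤ ‖T x‖

def EmbedsInto (X Y : Type*) [NormedAddCommGroup X] [NormedSpace ℝ X]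
    [NormedAddCommGroup Y] [NormedSpace ℝ Y] : Prop :=
  ∃ T : X →L[ℝ] Y, IsIsoEmbedding T

def IsQuotientOf (X W : Type*) [NormedAddCommGroup X] [NormedSpace ℝ X]
    [NormedAddCommGroup W] [NormedSpace ℝ W] : Prop :=
  ∃ Q : W →L[ℝ] X, Function.Surjective Q

def IsReflexive (X : Type*) [NormedAddCommGroup X] [NormedSpace ℝ X] : Prop :=
  Function.Surjective (NormedSpace.inclusionInDoubleDual ℝ X)

/-- `X` contains an isomorphic copy of `ℓ₁` -/
def ContainsIsomorphicL1 (X : Type*) [NormedAddCommGroup X] [NormedSpace ℝ X] : Prop :=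
  ∃ (x : ℕ → X) (c : ℝ), 0 < c ∧ (∀ n, ‖x n‖ ≤ 1) ∧
    ∀ (s : Finset ℕ) (a : ℕ → ℝ), c * ∑ i ∈ s, |a i| ≤ ‖∑ i ∈ s, a i • x i‖

/-! ### Renormings and asymptotic moduli -/

section Norms

variable (X : Type*) [NormedAddCommGroup X] [NormedSpace ℝ X]

/-- `N` is an equivalent norm on `X` -/
def EquivNorm (N : Seminorm ℝ X) : Prop :=
  ∃ c C : ℝ, 0 < c ∧ ∀ x : X, c * ‖x‖ ≤ N x ∧ N x ≤ C * ‖x‖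

/-- the modulus `ρ̄_X(t)` of asymptotic uniform smoothness of the norm `N` -/
noncomputable def ausModulus (N : Seminorm ℝ X) (t : ℝ) : ℝ :=
  (⨆ x : {x : X // N x = 1}, ⨅ Y : ↥(cofSub X),
    ⨆ y : {y : X // y ∈ Y.1 ∧ N y ≤ t}, N (x.1 + y.1)) - 1

/-- the modulus `δ̄_X(t)` of asymptotic uniform convexity of the norm `N` -/
noncomputable def aucModulus (N : Seminorm ℝ X) (t : ℝ) : ℝ :=
  (⨅ x : {x : X // N x = 1}, ⨆ Y : ↥(cofSub X),
    ⨅ y : {y : X // y ∈ Y.1 ∧ t ≤ N y}, N (x.1 + y.1)) - 1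

/-- the norm `N` is asymptotically uniformly smooth -/
def IsAUS (N : Seminorm ℝ X) : Prop :=
  Tendsto (fun t => ausModulus X N t / t) (𝓝[>] (0 : ℝ)) (𝓝 0)

/-- the norm `N` is a.u.s. of power type `q` -/
def IsAUSPowerType (N : Seminorm ℝ X) (q : ℝ) : Prop :=
  ∃ K : ℝ, ∀ t : ℝ, 0 < t → ausModulus X N t ≤ K * t ^ q

/-- the norm `N` is asymptotically uniformly convex -/
def IsAUC (N : Seminorm ℝ X) : Prop := ∀ t : ℝ, 0 < t → 0 < aucModulus X N t

/-- the norm `N` is a.u.c. of power type `p` -/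
def IsAUCPowerType (N : Seminorm ℝ X) (p : ℝ) : Prop :=
  ∃ K : ℝ, 0 < K ∧ ∀ t : ℝ, 0 < t → t ≤ 1 → K * t ^ p ≤ aucModulus X N t

/-- the dual norm of `N` on `X^*` -/
noncomputable def dualSeminormFun (N : Seminorm ℝ X) (f : X →L[ℝ] ℝ) : ℝ :=
  ⨆ x : {x : X // N x ≤ 1}, |f x.1|

/-- the w*-closed finite codimensional subspaces of `X^*` (w*-closedness taken
sequentially on bounded sequences, which is equivalent for separable `X`) -/
def cofWStar : Set (Submodule ℝ (X →L[ℝ] ℝ)) :=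
  {Y | (∃ F : Submodule ℝ (X →L[ℝ] ℝ), FiniteDimensional ℝ F ∧ Y ⊔ F = ⊤) ∧
    ∀ (f : ℕ → X →L[ℝ] ℝ) (g : X →L[ℝ] ℝ), (∀ n, f n ∈ Y) →
      (∃ M : ℝ, ∀ n, ‖f n‖ ≤ M) →
      (∀ v : X, Tendsto (fun n => f n v) atTop (𝓝 (g v))) → g ∈ Y}

/-- the modulus `δ̄^*(t)` of w*-asymptotic uniform convexity of a norm `Nd` on `X^*` -/
noncomputable def aucStarModulus (Nd : (X →L[ℝ] ℝ) → ℝ) (t : ℝ) : ℝ :=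
  (⨅ f : {f : X →L[ℝ] ℝ // Nd f = 1}, ⨆ Y : ↥(cofWStar X),
    ⨅ g : {g : X →L[ℝ] ℝ // g ∈ Y.1 ∧ t ≤ Nd g}, Nd (f.1 + g.1)) - 1

/-- the renorming of `X` by `N` is w*-uniformly Kadec–Klee with modulus `δ` -/
def WStarUKKmod (N : Seminorm ℝ X) (δ : ℝ → ℝ) : Prop :=
  ∀ ε : ℝ, 0 < ε → ∀ (f : ℕ → X →L[ℝ] ℝ) (g : X →L[ℝ] ℝ),
    (∀ n, dualSeminormFun X N (f n) ≤ 1) →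
    (∀ v : X, Tendsto (fun n => f n v) atTop (𝓝 (g v))) →
    ε ≤ Filter.liminf (fun n => dualSeminormFun X N (f n - g)) atTop →
    dualSeminormFun X N g ≤ 1 - δ ε

/-- the norm `N` is uniformly convex -/
def UniformlyConvexNorm (N : Seminorm ℝ X) : Prop :=
  ∀ ε : ℝ, 0 < ε → ∃ δ : ℝ, 0 < δ ∧ ∀ x y : X,
    N x ≤ 1 → N y ≤ 1 → ε ≤ N (x - y) → N (x + y) / 2 ≤ 1 - δ

/-- `X` is superreflexive, i.e. admits an equivalent uniformly convex norm -/
def IsSuperreflexive : Prop :=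
  ∃ N : Seminorm ℝ X, EquivNorm X N ∧ UniformlyConvexNorm X N

end Norms

/-! ### The Szlenk index -/

section Szlenk

variable (X : Type*) [NormedAddCommGroup X] [NormedSpace ℝ X]

/-- one step of the Szlenk derivation (w*-convergence taken sequentially) -/
def szDeriv (ε : ℝ) (K : Set (X →L[ℝ] ℝ)) : Set (X →L[ℝ] ℝ) :=
  {g | g ∈ K ∧ ∃ f : ℕ → X →L[ℝ] ℝ, (∀ n, f n ∈ K) ∧
    (∀ v : X, Tendsto (fun n => f n v) atTop (𝓝 (g v))) ∧
    ε ≤ Filter.liminf (fun n => ‖f n - g‖) atTop}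

/-- the Szlenk sets `K_α(X, ε)` -/
noncomputable def szSet (ε : ℝ) (α : Ordinal.{0}) : Set (X →L[ℝ] ℝ) :=
  Ordinal.limitRecOn (motive := fun _ => Set (X →L[ℝ] ℝ)) α
    (Metric.closedBall 0 1)
    (fun _ K => szDeriv X ε K)
    (fun o _ ih => ⋂ (β : Ordinal.{0}) (h : β < o), ih β h)

open scoped Classical in
/-- `Sz(X, ε)`:  the least `α` with `K_α(X, ε) = ∅`, and `ω₁` if there is none -/
noncomputable def szIndexEps (ε : ℝ) : Ordinal.{0} :=
  if ({α : Ordinal.{0} | szSet X ε α = ∅}).Nonempty then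
    sInf {α : Ordinal.{0} | szSet X ε α = ∅}
  else (Cardinal.aleph 1).ord

/-- the Szlenk index `Sz(X)` -/
noncomputable def szIndex : Ordinal.{0} :=
  ⨆ ε : ↥(Set.Ioo (0 : ℝ) 1), szIndexEps X ε.1

end Szlenk

/-! ### Asymptotic structure -/

section Asymp

variable (X : Type*) [NormedAddCommGroup X] [NormedSpace ℝ X]

/-- `(e i)` (a finite sequence in some normed space `V`) belongs to the `n`-th
asymptotic structure `{X}_n` of `X`:  it is a normalized monotone basis, and for each
`ε > 0` Player II has a winning strategy (given by `t`, a function of the history of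
Player I's moves) in the `n`-step subspace game producing a sequence
`(1+ε)`-equivalent to `(e i)`. -/
def InAsympStructure {V : Type*} [NormedAddCommGroup V] [NormedSpace ℝ V]
    (n : ℕ) (e : Fin n → V) : Prop :=
  (∀ i, ‖e i‖ = 1) ∧ LinearIndependent ℝ e ∧
  (∀ (a : Fin n → ℝ) (k m : ℕ), k ≤ m →
    ‖∑ i ∈ Finset.univ.filter (fun i : Fin n => (i : ℕ) < k), a i • e i‖ ≤
      ‖∑ i ∈ Finset.univ.filter (fun i : Fin n => (i : ℕ) < m), a i • e i‖) ∧
  ∀ ε : ℝ, 0 < ε → ∃ t : List (Submodule ℝ X) → X,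
    ∀ Y : Fin n → Submodule ℝ X, (∀ i, Y i ∈ cofSub X) →
      ∀ xx : Fin n → X,
        (∀ i : Fin n, xx i = t (List.ofFn fun j : Fin (i.1 + 1) => Y (Fin.castLE i.isLt j))) →
        (∀ i, xx i ∈ Y i ∧ ‖xx i‖ = 1) ∧
        ∀ a : Fin n → ℝ,
          ‖∑ i, a i • e i‖ ≤ (1 + ε) * ‖∑ i, a i • xx i‖ ∧
          ‖∑ i, a i • xx i‖ ≤ (1 + ε) * ‖∑ i, a i • e i‖

/-- `X` is an asymptotic `ℓ_p` space -/
def IsAsymptoticLpSpace (p : ℝ≥0∞) : Prop :=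
  ∃ C : ℝ, 1 ≤ C ∧ ∀ (n : ℕ) (V : Type) [NormedAddCommGroup V] [NormedSpace ℝ V]
    (e : Fin n → V), InAsympStructure X n e →
      ∀ a : Fin n → ℝ,
        C⁻¹ * lpSumOn p Finset.univ a ≤ ‖∑ i, a i • e i‖ ∧
        ‖∑ i, a i • e i‖ ≤ C * lpSumOn p Finset.univ a

end Asymp

/-! ### Unconditional bases -/

section Bases

variable {V : Type*} [NormedAddCommGroup V] [NormedSpace ℝ V]

/-- `y` is a normalized block basis of `(v i)` -/
def IsNormalizedBlockBasis (v : ℕ → V) (y : ℕ → V) : Prop :=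
  ∃ (s : ℕ → Finset ℕ) (b : ℕ → ℝ),
    (∀ n, (s n).Nonempty) ∧
    (∀ n, ∀ i ∈ s n, ∀ j ∈ s (n + 1), i < j) ∧
    (∀ n, y n = ∑ i ∈ s n, b i • v i) ∧ ∀ n, ‖y n‖ = 1

/-- `(v i)` is a regular normalized `1`-unconditional basic sequence -/
def RegularBasis (v : ℕ → V) : Prop :=
  (∀ i, ‖v i‖ = 1) ∧
  (∀ (s : Finset ℕ) (a ε : ℕ → ℝ), (∀ i, |ε i| ≤ 1) →
    ‖∑ i ∈ s, (ε i * a i) • v i‖ ≤ ‖∑ i ∈ s, a i • v i‖) ∧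
  (∀ y : ℕ → V, IsNormalizedBlockBasis v y → ∃ C : ℝ, ∀ (s : Finset ℕ) (a : ℕ → ℝ),
    ‖∑ i ∈ s, a i • v i‖ ≤ C * ‖∑ i ∈ s, a i • y i‖) ∧
  (∃ c : ℝ, 0 < c ∧ ∀ (n : ℕ) (s : Finset ℕ) (a : ℕ → ℝ),
    c * ‖∑ i ∈ s, a i • v i‖ ≤ ‖∑ i ∈ s, a i • v (i + n)‖) ∧
  (∃ d : ℝ, 0 < d ∧ ∀ m : ℕ, ∃ L, m ≤ L ∧ ∀ k ≤ m, ∀ (s : Finset ℕ) (a : ℕ → ℝ),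
    (∀ i ∈ s, L < i) → d * ‖∑ i ∈ s, a i • v i‖ ≤ ‖∑ i ∈ s, a i • v (i - k)‖)

end Bases

/-! ### Bundled Banach spaces -/

structure BanachSp where
  carrier : Type*
  [nacg : NormedAddCommGroup carrier]
  [nsp : NormedSpace ℝ carrier]
  [complete : CompleteSpace carrier]

attribute [instance] BanachSp.nacg BanachSp.nsp BanachSp.complete

/-- a Banach space together with an FDD -/
structure BanachFDD extends BanachSp where
  E : ℕ → Submodule ℝ carrier
  isFDD : IsFDD E

/-- abstract norms -/
structure IsNormOn (W : Type*) [AddCommGroup W] [Module ℝ W] (N : W → ℝ) : Prop where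
  pos : ∀ w : W, w ≠ 0 → 0 < N w
  zero : N 0 = 0
  smul : ∀ (a : ℝ) (w : W), N (a • w) = |a| * N w
  add : ∀ w w' : W, N (w + w') ≤ N w + N w'

/-- conclusion of Lemma 2.7 of Odell–Schlumprecht for the isometric embedding
`T : X → W` and the decreasing sequence `(Y n)` -/
def L27Conclusion {X : Type*} [NormedAddCommGroup X] [NormedSpace ℝ X]
    (Y : ℕ → Submodule ℝ X) (W : BanachFDD) (T : X →ₗᵢ[ℝ] W.carrier) : Prop :=
  Dense {x : X | W.isFDD.FinSupp (T x)} ∧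
  (∀ (n : ℕ) (x : X), T x ∈ W.isFDD.tail n → x ∈ Y n) ∧
  ∃ c : ℝ, 0 < c ∧ ∀ n : ℕ, ∃ D : Finset (W.carrier →L[ℝ] ℝ),
    (∀ f ∈ D, ‖f‖ = 1 ∧ ∀ w ∈ W.isFDD.tail n, f w = 0) ∧
    ∀ x : X, ∃ f ∈ D, Metric.infDist x (Y n : Set X) ≤ c * f (T x)

instance : Fact ((1 : ℝ≥0∞) ≤ 2) := ⟨one_le_two⟩
instance : Fact ((1 : ℝ≥0∞) ≤ ⊤) := ⟨le_top⟩

/-! Put `A' = A_{ε/2}`. Player I wins the `(cl A', B)`-game iff every finite stage of the play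
extends to a member of `A'`; the game is closed for Player I, so the positions from which Player II
can force a non-extendable stage carry ordinal ranks (Gale–Stewart). If the empty position is
ranked, rank-decreasing answers of Player II with increasing supports form a block tree with no
branch in `cl A'`, contradicting `WI(cl A', B)`. Otherwise Player I has a response at every
unranked position. Only finitely many positions consist of points of finite `ε/2`-nets of the
(bounded, finite dimensional) parts of the `Bᵢ` supported on the first blocks, so the blocking
can start every block beyond all these responses. The net approximation of a skipped block
sequence in `∏ Bᵢ` is then a play in which Player I never loses, which puts the sequence in
`cl(A_ε)`. If Player II has no legal move at all, a coarse blocking admits no skipped block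
sequence in `∏ Bᵢ`. -/

section ClosedGame

variable {α : Type*}

def Viable (A' : Set (ℕ → α)) (p : List α) : Prop :=
  ∃ y ∈ A', ∀ i (hi : i < p.length), y i = p[i]

theorem viable_map_range_iff {A' : Set (ℕ → α)} {g : ℕ → α} {k : ℕ} :
    Viable A' ((List.range k).map g) ↔ ∃ y ∈ A', ∀ i < k, y i = g i := by
  simp [Viable]

theorem mem_discClosure_iff_forall_viable {A' : Set (ℕ → α)} {g : ℕ → α} :
    g ∈ discClosure A' ↔ ∀ k, Viable A' ((List.range k).map g) := by
  simp only [viable_map_range_iff]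
  rfl

variable (M : ℕ → ℕ → α → Prop) (A' : Set (ℕ → α))

/-- In the game on positions `p : List α`, Player I names `n` and Player II answers some `v`
with `M p.length n v`. `escapeStage M A' β` is the set of positions of rank at most `β` from which
Player II can force a position that no member of `A'` extends. -/
noncomputable def escapeStage : Ordinal.{0} → Set (List α) :=
  Ordinal.lt_wf.fix fun β stage =>
    {p | ¬ Viable A' p ∨
      ∀ n, ∃ v, M p.length n v ∧ ∃ (γ : Ordinal.{0}) (hγ : γ < β), p ++ [v] ∈ stage γ hγ}

theorem escapeStage_eq (β : Ordinal.{0}) :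
    escapeStage M A' β = {p | ¬ Viable A' p ∨
      ∀ n, ∃ v, M p.length n v ∧ ∃ γ < β, p ++ [v] ∈ escapeStage M A' γ} := by
  rw [escapeStage, WellFounded.fix_eq]
  simp only [exists_prop]

def Escape : Set (List α) := {p | ∃ β, p ∈ escapeStage M A' β}

noncomputable def escapeRank (p : List α) : Ordinal.{0} := sInf {β | p ∈ escapeStage M A' β}

variable {M A'}

theorem viable_of_not_mem_escape {p : List α} (hp : p ∉ Escape M A') : Viable A' p := by
  by_contra hv
  exact hp ⟨0, by rw [escapeStage_eq]; exact Or.inl hv⟩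

theorem exists_forall_not_mem_escape {p : List α} (hp : p ∉ Escape M A') :
    ∃ n, ∀ v, M p.length n v → p ++ [v] ∉ Escape M A' := by
  by_contra! hcon
  choose v hvM β hβ using hcon
  refine hp ⟨(⨆ n, β n) + 1, ?_⟩
  rw [escapeStage_eq]
  exact Or.inr fun n => ⟨v n, hvM n, β n, Order.lt_add_one_iff.2 (Ordinal.le_iSup β n), hβ n⟩

theorem exists_strategy_not_mem_escape :
    ∃ σ : List α → ℕ, ∀ p ∉ Escape M A', ∀ v, M p.length (σ p) v → p ++ [v] ∉ Escape M A' := by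
  have hσ : ∀ p, ∃ n, p ∉ Escape M A' → ∀ v, M p.length n v → p ++ [v] ∉ Escape M A' := by
    intro p
    by_cases hp : p ∈ Escape M A'
    · exact ⟨0, absurd hp⟩
    · exact (exists_forall_not_mem_escape hp).imp fun _ hn _ => hn
  choose σ hσ using hσ
  exact ⟨σ, hσ⟩

theorem exists_mem_escape_escapeRank_lt {p : List α} (hp : p ∈ Escape M A') (hv : Viable A' p)
    (n : ℕ) : ∃ v, M p.length n v ∧ p ++ [v] ∈ Escape M A' ∧
      escapeRank M A' (p ++ [v]) < escapeRank M A' p := by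
  have hrank : p ∈ escapeStage M A' (escapeRank M A' p) :=
    csInf_mem (s := {β : Ordinal.{0} | p ∈ escapeStage M A' β}) hp
  rw [escapeStage_eq] at hrank
  obtain ⟨v, hvM, γ, hγ, hmem⟩ := hrank.resolve_left (not_not_intro hv) n
  exact ⟨v, hvM, ⟨γ, hmem⟩,
    (csInf_le' (s := {β : Ordinal.{0} | p ++ [v] ∈ escapeStage M A' β}) hmem).trans_lt hγ⟩

end ClosedGame

section StrategyTree

variable {α : Type*}

/-- The positions reached along the node `l` when Player II answers `n` at position `p` by
`f p n`. -/
def treePath (f : List α → ℕ → α) (l : List ℕ) : List α :=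
  l.foldl (fun p n => p ++ [f p n]) []

def treeOf (f : List α → ℕ → α) (l : List ℕ) : α :=
  f (treePath f l.dropLast) (l.getLastD 0)

theorem treePath_append_singleton (f : List α → ℕ → α) (l : List ℕ) (n : ℕ) :
    treePath f (l ++ [n]) = treePath f l ++ [f (treePath f l) n] := by
  simp [treePath, List.foldl_append]

theorem treeOf_append_singleton (f : List α → ℕ → α) (l : List ℕ) (n : ℕ) :
    treeOf f (l ++ [n]) = f (treePath f l) n := by
  simp [treeOf]

theorem treePath_map_range (f : List α → ℕ → α) (φ : ℕ → ℕ) (k : ℕ) :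
    treePath f ((List.range k).map φ) = (List.range k).map (branchOf (treeOf f) φ) := by
  induction k with
  | zero => rfl
  | succ k ih =>
    rw [List.range_succ, List.map_append, List.map_append, List.map_singleton,
      List.map_singleton, treePath_append_singleton, ih, branchOf, List.range_succ,
      List.map_append, List.map_singleton, treeOf_append_singleton, ih]

theorem branchOf_treeOf (f : List α → ℕ → α) (φ : ℕ → ℕ) (k : ℕ) :
    branchOf (treeOf f) φ k = f ((List.range k).map (branchOf (treeOf f) φ)) (φ k) := by
  rw [branchOf, List.range_succ, List.map_append, List.map_singleton, treeOf_append_singleton,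
    treePath_map_range]

theorem branchOf_treeOf_not_mem_discClosure {M : ℕ → ℕ → α → Prop} {A' : Set (ℕ → α)}
    {f : List α → ℕ → α}
    (hf : ∀ p n, p ∈ Escape M A' → Viable A' p →
      p ++ [f p n] ∈ Escape M A' ∧ escapeRank M A' (p ++ [f p n]) < escapeRank M A' p)
    (hnil : [] ∈ Escape M A') (φ : ℕ → ℕ) : branchOf (treeOf f) φ ∉ discClosure A' := by
  set b := branchOf (treeOf f) φ
  intro hb
  rw [mem_discClosure_iff_forall_viable] at hb
  have hsucc : ∀ k, (List.range (k + 1)).map b =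
      (List.range k).map b ++ [f ((List.range k).map b) (φ k)] := by
    intro k
    rw [List.range_succ, List.map_append, List.map_singleton]
    exact congrArg (_ ++ [·]) (branchOf_treeOf f φ k)
  have hmem : ∀ k, (List.range k).map b ∈ Escape M A' := by
    intro k
    induction k with
    | zero => exact hnil
    | succ k ih => rw [hsucc]; exact (hf _ _ ih (hb k)).1
  obtain ⟨k, hk⟩ := WellFounded.not_rel_apply_succ (r := (· < ·))
    fun k => escapeRank M A' ((List.range k).map b)
  exact hk (by simp only [hsucc]; exact (hf _ _ (hmem k) (hb k)).2)

end StrategyTree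

theorem exists_bound_on_lists {α : Type*} (r : List α → ℕ) {U : Set α} (hU : U.Finite) (c : ℕ) :
    ∃ m, ∀ p : List α, p.length ≤ c → (∀ v ∈ p, v ∈ U) → r p ≤ m := by
  have := hU.to_subtype
  obtain ⟨m, hm⟩ := ((List.finite_length_le U c).image fun p => r (p.map Subtype.val)).bddAbove
  refine ⟨m, fun p hp hpU => ?_⟩
  lift p to List U using hpU
  exact hm ⟨p, by simpa using hp, rfl⟩

theorem exists_blocking_dominating {α : Type*} (resp : List α → ℕ) (net : ℕ → ℕ → ℕ → Set α)
    (hnet : ∀ t a b, (net t a b).Finite) :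
    ∃ N : ℕ → ℕ, IsBlockingSeq N ∧ ∀ (a b : ℕ → ℕ) (w : ℕ → α), 0 < a 0 → (∀ n, a n ≤ b n) →
      (∀ n, b n + 1 < a (n + 1)) → (∀ t, w t ∈ net t (N (a t)) (N (b t + 1))) →
      ∀ k, resp ((List.range k).map w) < N (a k) := by
  let U : ℕ → Set α := fun c => ⋃ (t : Fin (c + 1)) (a : Fin (c + 1)) (b : Fin (c + 1)), net t a b
  have hU : ∀ c, (U c).Finite := fun c =>
    Set.finite_iUnion fun _ => Set.finite_iUnion fun _ => Set.finite_iUnion fun _ => hnet _ _ _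
  choose bound hbound using fun c => exists_bound_on_lists resp (hU c) c
  let N : ℕ → ℕ := fun k => Nat.rec 0 (fun _ m => max m (bound m) + 1) k
  have hN : StrictMono N := strictMono_nat_of_lt_succ fun k => Nat.lt_succ_of_le (le_max_left _ _)
  refine ⟨N, ⟨rfl, hN⟩, fun a b w ha0 hab hba hw k => ?_⟩
  have ha : StrictMono a := strictMono_nat_of_lt_succ fun n => by linarith [hab n, hba n]
  have hka : k < a k := by
    induction k with
    | zero => exact ha0
    | succ k ih => exact Nat.lt_of_le_of_lt ih (ha (Nat.lt_succ_self k))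
  set c := N (a k - 1)
  have hprefix : ∀ v ∈ (List.range k).map w, v ∈ U c := by
    simp only [List.mem_map, List.mem_range]
    rintro _ ⟨j, hj, rfl⟩
    have hbj : b j + 1 ≤ a k - 1 := by
      have := ha.monotone (show j + 1 ≤ k by omega)
      have := hba j
      omega
    have hc : ∀ m ≤ a k - 1, m ≤ c := fun m hm => (hN.id_le m).trans (hN.monotone hm)
    simp only [U, Set.mem_iUnion]
    exact ⟨⟨j, Nat.lt_succ_of_le (hc j (by omega))⟩,
      ⟨N (a j), Nat.lt_succ_of_le (hN.monotone ((hab j).trans (by omega)))⟩,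
      ⟨N (b j + 1), Nat.lt_succ_of_le (hN.monotone hbj)⟩, hw j⟩
  calc resp ((List.range k).map w) ≤ bound c :=
        hbound c _ (by simpa using (hN.id_le _).trans' (by omega : k ≤ a k - 1)) hprefix
    _ < N (a k - 1 + 1) := Nat.lt_succ_of_le (le_max_right _ _)
    _ = N (a k) := by rw [Nat.sub_add_cancel (by omega)]

namespace IsFDD

variable {Z : Type*} [NormedAddCommGroup Z] [NormedSpace ℝ Z] {E : ℕ → Submodule ℝ Z}

theorem mem_sup_range_of_suppE_lt (h : IsFDD E) {v : Z} {b : ℕ} (hv : ∀ j ∈ h.suppE v, j < b) :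
    v ∈ (Finset.range b).sup E := by
  have hcoord := (h.rep v).exists.choose_spec
  have hsum : v = ∑ i ∈ Finset.range b, h.coord v i := by
    refine tendsto_nhds_unique hcoord.2 (tendsto_const_nhds.congr' ?_)
    filter_upwards [eventually_ge_atTop b] with n hn
    refine Finset.sum_subset (Finset.range_subset_range.2 hn) fun i _ hi => ?_
    by_contra hne
    exact hi (Finset.mem_range.2 (hv i hne))
  rw [hsum]
  exact Submodule.sum_mem _ fun i hi => Finset.le_sup (f := E) hi (hcoord.1 i)

theorem totallyBounded_of_suppE_lt (h : IsFDD E) {S : Set Z} (hS : Bornology.IsBounded S)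
    {b : ℕ} (hb : ∀ v ∈ S, ∀ j ∈ h.suppE v, j < b) : TotallyBounded S := by
  set F := (Finset.range b).sup E
  have := h.finiteDim
  have : FiniteDimensional ℝ F := Submodule.finiteDimensional_finset_sup _ _
  obtain ⟨r, hr⟩ := hS.subset_closedBall 0
  refine ((isCompact_closedBall (0 : F) r).image F.subtypeL.continuous).totallyBounded.subset ?_
  intro v hv
  exact ⟨⟨v, h.mem_sup_range_of_suppE_lt (hb v hv)⟩, by simpa using hr hv, rfl⟩

theorem exists_blockSeq (h : IsFDD E) {P : Z → Prop}
    (hP : ∀ n, ∃ v, P v ∧ h.FinSupp v ∧ ∀ j ∈ h.suppE v, n < j) :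
    ∃ z : ℕ → Z, (∀ k, P (z k) ∧ h.FinSupp (z k)) ∧
      ∀ m n, m < n → ∀ i ∈ h.suppE (z m), ∀ j ∈ h.suppE (z n), i < j := by
  choose g hgP hgfin hgsupp using hP
  choose M hM using fun n => (hgfin n).bddAbove
  let bnd : ℕ → ℕ := fun k => Nat.rec 0 (fun _ c => max (c + 1) (M c)) k
  have hbnd : StrictMono bnd :=
    strictMono_nat_of_lt_succ fun k => Nat.lt_of_succ_le (le_max_left _ _)
  refine ⟨fun k => g (bnd k), fun k => ⟨hgP _, hgfin _⟩, fun m n hmn i hi j hj => ?_⟩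
  calc i ≤ M (bnd m) := hM _ hi
    _ ≤ bnd (m + 1) := le_max_right _ _
    _ ≤ bnd n := hbnd.monotone hmn
    _ < j := hgsupp _ j hj

theorem isBlockTree_treeOf (h : IsFDD E) {f : List Z → ℕ → Z}
    (hf : ∀ p n, f p n ≠ 0 ∧ h.FinSupp (f p n))
    (hsupp : ∀ p m n, m < n → ∀ i ∈ h.suppE (f p m), ∀ j ∈ h.suppE (f p n), i < j) :
    IsBlockTree h (treeOf f) := by
  refine ⟨fun l _ hl => ?_, fun l m n _ hmn => ?_⟩
  · obtain ⟨l, n, rfl⟩ := l.eq_nil_or_concat'.resolve_left hl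
    rw [treeOf_append_singleton]
    exact hf _ _
  · simp only [treeOf_append_singleton]
    exact hsupp _ m n hmn

def IsMove (h : IsFDD E) (B : ℕ → Set Z) (k n : ℕ) (v : Z) : Prop :=
  v ∈ B k ∧ h.FinSupp v ∧ ∀ j ∈ h.suppE v, n < j

theorem nil_not_mem_escape (h : IsFDD E) {B : ℕ → Set Z} (hB : ∀ i, B i ⊆ {z : Z | ‖z‖ = 1})
    {A' : Set (ℕ → Z)} (hmoves : ∀ k n, ∃ v, h.IsMove B k n v)
    (hWI : WIGameFDD h (discClosure A') B) : [] ∉ Escape (h.IsMove B) A' := by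
  intro hnil
  have hanswer : ∀ (p : List Z) n, ∃ v, (v ∈ B p.length ∧
      (p ∈ Escape (h.IsMove B) A' → Viable A' p → p ++ [v] ∈ Escape (h.IsMove B) A' ∧
        escapeRank (h.IsMove B) A' (p ++ [v]) < escapeRank (h.IsMove B) A' p)) ∧
      h.FinSupp v ∧ ∀ j ∈ h.suppE v, n < j := by
    intro p n
    by_cases hp : p ∈ Escape (h.IsMove B) A' ∧ Viable A' p
    · obtain ⟨v, ⟨hvB, hv⟩, hmem, hlt⟩ := exists_mem_escape_escapeRank_lt hp.1 hp.2 n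
      exact ⟨v, ⟨hvB, fun _ _ => ⟨hmem, hlt⟩⟩, hv⟩
    · obtain ⟨v, hvB, hv⟩ := hmoves p.length n
      exact ⟨v, ⟨hvB, fun h₁ h₂ => absurd ⟨h₁, h₂⟩ hp⟩, hv⟩
  choose f hf hsupp using fun p => h.exists_blockSeq (hanswer p)
  have hnorm : ∀ p n, ‖f p n‖ = 1 := fun p n => hB _ (hf p n).1.1
  have htree : IsBlockTree h (treeOf f) := h.isBlockTree_treeOf
    (fun p n => ⟨norm_ne_zero_iff.1 (by rw [hnorm]; exact one_ne_zero), (hf p n).2⟩) hsupp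
  have hsphere : TreeInSphere (treeOf f) := fun l _ hl => by
    obtain ⟨l, n, rfl⟩ := l.eq_nil_or_concat'.resolve_left hl
    rw [treeOf_append_singleton]
    exact hnorm _ _
  have hbranch : ∀ φ : ℕ → ℕ, StrictMono φ → ∀ i, branchOf (treeOf f) φ i ∈ B i := by
    intro φ _ i
    rw [branchOf_treeOf]
    simpa using (hf ((List.range i).map (branchOf (treeOf f) φ)) (φ i)).1.1
  obtain ⟨φ, -, hφ⟩ := hWI (treeOf f) htree hsphere hbranch
  exact branchOf_treeOf_not_mem_discClosure (fun p n => (hf p n).1.2) hnil φ hφ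

theorem exists_blocking_near_viable (h : IsFDD E) {B : ℕ → Set Z}
    (hB : ∀ i, Bornology.IsBounded (B i)) {A' : Set (ℕ → Z)} (hnil : [] ∉ Escape (h.IsMove B) A')
    {δ : ℕ → ℝ} (hδ : ∀ i, 0 < δ i) :
    ∃ N, IsBlockingSeq N ∧ ∀ z, h.IsSkippedBlockOfBlocking N z → (∀ i, z i ∈ B i) →
      ∀ n, ∃ y ∈ A', ∀ i < n, dist (z i) (y i) ≤ δ i := by
  obtain ⟨resp, hresp⟩ := exists_strategy_not_mem_escape (M := h.IsMove B) (A' := A')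
  let S : ℕ → ℕ → ℕ → Set Z := fun t a b => {v | v ∈ B t ∧ h.FinSupp v ∧ h.suppE v ⊆ Set.Ico a b}
  choose net hnetS hnetfin hnetcov using fun t a b =>
    Metric.finite_approx_of_totallyBounded (h.totallyBounded_of_suppE_lt (S := S t a b)
      ((hB t).subset fun _ hv => hv.1) fun _ hv _ hj => (hv.2.2 hj).2) _ (hδ t)
  obtain ⟨N, hN, hdom⟩ := exists_blocking_dominating resp net hnetfin
  refine ⟨N, hN, ?_⟩
  rintro z ⟨hz, a, b, ha0, hab, hba, hsupp⟩ hzB n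
  have happrox : ∀ t, ∃ u ∈ net t (N (a t)) (N (b t + 1)), dist (z t) u < δ t := fun t => by
    simpa using hnetcov t _ _ ⟨hzB t, (hz t).2, hsupp t⟩
  choose w hwnet hwz using happrox
  -- `w` is a play in which Player I follows `resp`
  have hplay : ∀ k, (List.range k).map w ∉ Escape (h.IsMove B) A' := by
    intro k
    induction k with
    | zero => exact hnil
    | succ k ih =>
      obtain ⟨hwB, hwfin, hwsupp⟩ := hnetS _ _ _ (hwnet k)
      rw [List.range_succ, List.map_append, List.map_singleton]
      refine hresp _ ih (w k) ⟨by simpa using hwB, hwfin, fun j hj => ?_⟩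
      exact (hdom a b w ha0 hab hba hwnet k).trans_le (hwsupp hj).1
  obtain ⟨y, hyA, hy⟩ := viable_map_range_iff.1 (viable_of_not_mem_escape (hplay n))
  exact ⟨y, hyA, fun i hi => hy i hi ▸ (hwz i).le⟩

theorem exists_blocking_skipped_not_mem_pi (h : IsFDD E) {B : ℕ → Set Z} {k n : ℕ}
    (hkn : ∀ v, ¬ h.IsMove B k n v) :
    ∃ N, IsBlockingSeq N ∧ ∀ z, h.IsSkippedBlockOfBlocking N z → ¬ ∀ i, z i ∈ B i := by
  refine ⟨fun j => (n + 1) * j, ⟨mul_zero _, strictMono_mul_left_of_pos n.succ_pos⟩, ?_⟩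
  rintro z ⟨hz, a, b, ha0, hab, hba, hsupp⟩ hzB
  have hak : 1 ≤ a k := by
    cases k with
    | zero => exact ha0
    | succ k => have := hba k; omega
  refine hkn (z k) ⟨hzB k, (hz k).2, fun j hj => ?_⟩
  have := (hsupp k hj).1
  nlinarith

end IsFDD

theorem mem_discClosure_fatten_of_forall_near {Z : Type*} [NormedAddCommGroup Z]
    {A : Set (ℕ → Z)} {ε ε' δ : ℕ → ℝ} {z : ℕ → Z} (hz : ∀ i, ‖z i‖ = 1)
    (hεδ : ∀ i, ε' i + δ i ≤ ε i) (hδ : ∀ i, 0 ≤ δ i)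
    (hnear : ∀ n, ∃ y ∈ fatten A ε', ∀ i < n, dist (z i) (y i) ≤ δ i) :
    z ∈ discClosure (fatten A ε) := by
  intro n
  obtain ⟨y, ⟨hy, u, hu, hyu⟩, hzy⟩ := hnear n
  refine ⟨fun i => if i < n then z i else y i, ⟨fun i => ?_, u, hu, fun i => ?_⟩,
    fun i hi => if_pos hi⟩
  · dsimp only
    split_ifs
    exacts [hz i, hy i]
  · dsimp only
    split_ifs with hi
    · calc ‖z i - u i‖ ≤ ‖z i - y i‖ + ‖y i - u i‖ := norm_sub_le_norm_sub_add_norm_sub _ _ _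
        _ ≤ δ i + ε' i := add_le_add (by simpa [dist_eq_norm] using hzy i hi) (hyu i)
        _ ≤ ε i := by linarith [hεδ i]
    · linarith [hyu i, hεδ i, hδ i]

theorem statement0_general {Z : Type*} [NormedAddCommGroup Z] [NormedSpace ℝ Z]
    {E : ℕ → Submodule ℝ Z} (h : IsFDD E)
    (B : ℕ → Set Z) (hB : ∀ i, B i ⊆ {z : Z | ‖z‖ = 1})
    (A : Set (ℕ → Z))
    (hWI : ∀ ε : ℕ → ℝ, Seq01 ε → WIGameFDD h (discClosure (fatten A ε)) B) :
    ∀ ε : ℕ → ℝ, Seq01 ε →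
      ∃ N : ℕ → ℕ, IsBlockingSeq N ∧
        ∀ z : ℕ → Z, h.IsSkippedBlockOfBlocking N z → (∀ i, z i ∈ B i) →
          z ∈ discClosure (fatten A ε) := by
  intro ε hε
  by_cases hmoves : ∀ k n, ∃ v, h.IsMove B k n v
  · have hε2 : Seq01 fun i => ε i / 2 := fun i => ⟨by linarith [hε i], by linarith [hε i]⟩
    have hbdd : ∀ i, Bornology.IsBounded (B i) := fun i =>
      (Metric.isBounded_sphere (x := (0 : Z)) (r := 1)).subset fun z hz => by simpa using hB i hz
    obtain ⟨N, hN, hnear⟩ := h.exists_blocking_near_viable hbdd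
      (h.nil_not_mem_escape hB hmoves (hWI _ hε2)) fun i => (hε2 i).1
    exact ⟨N, hN, fun z hz hzB => mem_discClosure_fatten_of_forall_near (fun i => hB i (hzB i))
      (fun i => by linarith) (fun i => (hε2 i).1.le) (hnear z hz hzB)⟩
  · simp only [not_forall, not_exists] at hmoves
    obtain ⟨k, n, hkn⟩ := hmoves
    obtain ⟨N, hN, hnone⟩ := h.exists_blocking_skipped_not_mem_pi hkn
    exact ⟨N, hN, fun z hz hzB => absurd hzB (hnone z hz)⟩

/-- **Theorem 2.2** (Odell–Schlumprecht).  Let `Z` be a Banach space with an FDD `(Eᵢ)`,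
let `B i ⊆ S_Z` and `A ⊆ S_Z^ω`.  If for every `ε̄ ⊂ (0,1]` Player I has a winning
strategy `WI(cl(A_ε̄), B)`, then for every `ε̄ ⊂ (0,1]` there is a blocking `(Gᵢ)` of
`(Eᵢ)` such that every skipped block sequence of `(Gᵢ)` with terms in the `B i` lies
in `cl(A_ε̄)`. -/
theorem statement0 {Z : Type*} [NormedAddCommGroup Z] [NormedSpace ℝ Z] [CompleteSpace Z]
    {E : ℕ → Submodule ℝ Z} (h : IsFDD E)
    (B : ℕ → Set Z) (hB : ∀ i, B i ⊆ {z : Z | ‖z‖ = 1})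
    (A : Set (ℕ → Z)) (hA : A ⊆ {z : ℕ → Z | ∀ i, ‖z i‖ = 1})
    (hWI : ∀ ε : ℕ → ℝ, Seq01 ε → WIGameFDD h (discClosure (fatten A ε)) B) :
    ∀ ε : ℕ → ℝ, Seq01 ε →
      ∃ N : ℕ → ℕ, IsBlockingSeq N ∧
        ∀ z : ℕ → Z, h.IsSkippedBlockOfBlocking N z → (∀ i, z i ∈ B i) →
          z ∈ discClosure (fatten A ε) :=
  statement0_general h B hB A hWI

end OS
end
end

section
/- Let X be a Banach space with separable dual and let q > 1. If X satisfies (∞,q)-tree estimates, then X* satisfies (q',1)-w*-tree estimates, where 1/q + 1/q' = 1. Quantitatively: if X satisfies K-(∞,q)-tree estimates then every w*-null tree in S_{X*} admits a branch (x_i*) with ‖Σ a_i x_i*‖ ≥ (4K)^{-1}(Σ|a_i|^{q'})^{1/q'} for all finitely supported scalars (a_i). -/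
/-! Common definitions for formalizing results of
E. Odell and Th. Schlumprecht,
"Embedding into Banach spaces with finite dimensional decompositions". -/

open Filter Topology
open scoped ENNReal NNReal

noncomputable section

namespace OS

/-
Given a w*-null tree `(x*_α)` in `S_{X*}`, we build a weakly null tree `(z_α)` in `S_X` and a
pruning of `(x*_α)` such that along every branch the pairs are almost biorthogonal:
`x*_i(z_i) ≥ 2/5` and `|x*_i(z_j)| ≤ 2^{-i-j-2}/100` for `i ≠ j`. At each node, separability of
`X*` (sequential Banach–Alaoglu in `X**`) gives a w*-convergent subsequence of almost norming
vectors; differences of far-apart terms are weakly null and are still almost normed by suitable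
later functionals of the node, while finitely many earlier constraints hold eventually. An
upper `ℓ_q` branch `(z_i)` then gives the lower `ℓ_{q'}` estimate for `(x*_i)`: test `∑ aᵢ x*_i`
against `∑ bᵢ zᵢ`, where `b` attains equality in Hölder's inequality.
-/

section

variable {X : Type*} [NormedAddCommGroup X] [NormedSpace ℝ X]

theorem lpSumOn_ofReal {ι : Type*} {p : ℝ} (hp : 0 ≤ p) (s : Finset ι) (r : ι → ℝ) :
    lpSumOn (ENNReal.ofReal p) s r = (∑ i ∈ s, |r i| ^ p) ^ (1 / p) := by
  rw [lpSumOn, if_neg ENNReal.ofReal_ne_top, ENNReal.toReal_ofReal hp]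

theorem exists_mul_eq_abs_rpow_of_holderConjugate {p q : ℝ} (hpq : p.HolderConjugate q)
    (a : ℝ) : ∃ b : ℝ, a * b = |a| ^ p ∧ |b| ^ q = |a| ^ p := by
  rcases eq_or_ne a 0 with rfl | ha
  · exact ⟨0, by simp [Real.zero_rpow hpq.ne_zero], by
      simp [Real.zero_rpow hpq.ne_zero, Real.zero_rpow hpq.symm.ne_zero]⟩
  have ha' : |a| ≠ 0 := abs_ne_zero.2 ha
  refine ⟨SignType.sign a * |a| ^ (p - 1), ?_, ?_⟩
  · rw [← mul_assoc, self_mul_sign, Real.rpow_sub_one ha', mul_div_cancel₀ _ ha']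
  · have hsign : |(SignType.sign a : ℝ)| = 1 := by
      rcases lt_or_gt_of_ne ha with h | h <;> simp [h]
    rw [abs_mul, hsign, one_mul, abs_of_nonneg (Real.rpow_nonneg (abs_nonneg a) _),
      ← Real.rpow_mul (abs_nonneg a), hpq.sub_one_mul_conj]

theorem abs_le_sum_abs_rpow_rpow {p : ℝ} (hp : 0 < p) {s : Finset ℕ} {a : ℕ → ℝ} {i : ℕ}
    (hi : i ∈ s) : |a i| ≤ (∑ j ∈ s, |a j| ^ p) ^ (1 / p) := by
  calc |a i| = (|a i| ^ p) ^ (1 / p) := by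
        rw [← Real.rpow_mul (abs_nonneg _), mul_one_div_cancel hp.ne', Real.rpow_one]
    _ ≤ _ := by
        gcongr
        exact Finset.single_le_sum (f := fun j => |a j| ^ p)
          (fun j _ => Real.rpow_nonneg (abs_nonneg _) _) hi

theorem sum_two_inv_pow_succ_le_one (s : Finset ℕ) : ∑ i ∈ s, (2⁻¹ : ℝ) ^ (i + 1) ≤ 1 := by
  have hsum : Summable fun i : ℕ => (2⁻¹ : ℝ) ^ (i + 1) :=
    (summable_nat_add_iff 1).2 (summable_geometric_of_lt_one (by norm_num) (by norm_num))
  calc ∑ i ∈ s, (2⁻¹ : ℝ) ^ (i + 1) ≤ ∑' i : ℕ, (2⁻¹ : ℝ) ^ (i + 1) :=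
        hsum.sum_le_tsum s fun i _ => by positivity
    _ = 1 := by
        simp_rw [pow_succ, tsum_mul_right, tsum_geometric_inv_two]
        norm_num

theorem sum_abs_mul_two_inv_pow_le {p : ℝ} (hp : 0 < p) (s : Finset ℕ) (a : ℕ → ℝ) :
    ∑ i ∈ s, |a i| * (2⁻¹ : ℝ) ^ (i + 1) ≤ (∑ i ∈ s, |a i| ^ p) ^ (1 / p) :=
  calc ∑ i ∈ s, |a i| * (2⁻¹ : ℝ) ^ (i + 1)
      ≤ ∑ i ∈ s, (∑ j ∈ s, |a j| ^ p) ^ (1 / p) * (2⁻¹ : ℝ) ^ (i + 1) :=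
        Finset.sum_le_sum fun i hi => by gcongr; exact abs_le_sum_abs_rpow_rpow hp hi
    _ ≤ (∑ j ∈ s, |a j| ^ p) ^ (1 / p) * 1 := by
        rw [← Finset.mul_sum]
        gcongr
        exact sum_two_inv_pow_succ_le_one s
    _ = _ := mul_one _

theorem exists_norm_le_one_lt_apply (f : StrongDual ℝ X) {r : ℝ} (hr : r < ‖f‖) :
    ∃ u : X, ‖u‖ ≤ 1 ∧ r < f u := by
  obtain ⟨x, hx, hfx⟩ := f.exists_lt_apply_of_lt_opNorm hr
  rcases le_total 0 (f x) with h | h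
  · exact ⟨x, hx.le, by rwa [Real.norm_of_nonneg h] at hfx⟩
  · exact ⟨-x, by rw [norm_neg]; exact hx.le, by rwa [Real.norm_of_nonpos h, ← map_neg] at hfx⟩

structure IsAlmostBiorthogonal (y : ℕ → StrongDual ℝ X) (z : ℕ → X) : Prop where
  diag : ∀ i, 2 / 5 ≤ y i (z i)
  offDiag : ∀ i j, i ≠ j → |y i (z j)| ≤ (2⁻¹ : ℝ) ^ (i + 1) * (2⁻¹ : ℝ) ^ (j + 1) / 100

theorem apply_sum_smul_sum_smul (y : ℕ → StrongDual ℝ X) (z : ℕ → X) (s : Finset ℕ)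
    (a b : ℕ → ℝ) :
    (∑ i ∈ s, a i • y i) (∑ j ∈ s, b j • z j) = ∑ i ∈ s, ∑ j ∈ s, a i * b j * y i (z j) := by
  simp only [map_sum, map_smul, FunLike.coe_sum, FunLike.coe_smul, Finset.sum_apply,
    Pi.smul_apply, smul_eq_mul, Finset.mul_sum]
  rw [Finset.sum_comm]
  exact Finset.sum_congr rfl fun i _ => Finset.sum_congr rfl fun j _ => by ring

namespace IsAlmostBiorthogonal

variable {y : ℕ → StrongDual ℝ X} {z : ℕ → X}

theorem le_apply_sum (h : IsAlmostBiorthogonal y z) (s : Finset ℕ) {a b : ℕ → ℝ}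
    (hab : ∀ i, 0 ≤ a i * b i) :
    2 / 5 * ∑ i ∈ s, a i * b i - (∑ i ∈ s, |a i| * (2⁻¹ : ℝ) ^ (i + 1)) *
        (∑ j ∈ s, |b j| * (2⁻¹ : ℝ) ^ (j + 1)) / 100 ≤
      (∑ i ∈ s, a i • y i) (∑ j ∈ s, b j • z j) := by
  have hterm : ∀ i j, (if i = j then 2 / 5 * (a i * b j) else 0) -
      |a i| * (2⁻¹ : ℝ) ^ (i + 1) * (|b j| * (2⁻¹ : ℝ) ^ (j + 1)) / 100 ≤
        a i * b j * y i (z j) := fun i j => by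
    split_ifs with hij
    · subst hij
      have := mul_le_mul_of_nonneg_left (h.diag i) (hab i)
      have : 0 ≤ |a i| * (2⁻¹ : ℝ) ^ (i + 1) * (|b i| * (2⁻¹ : ℝ) ^ (i + 1)) / 100 := by
        positivity
      linarith
    · have hsmall : |a i * b j * y i (z j)| ≤
          |a i| * (2⁻¹ : ℝ) ^ (i + 1) * (|b j| * (2⁻¹ : ℝ) ^ (j + 1)) / 100 := by
        rw [abs_mul, abs_mul]
        calc |a i| * |b j| * |y i (z j)|
            ≤ |a i| * |b j| * ((2⁻¹ : ℝ) ^ (i + 1) * (2⁻¹ : ℝ) ^ (j + 1) / 100) := by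
              gcongr
              exact h.offDiag i j hij
          _ = _ := by ring
      linarith [neg_abs_le (a i * b j * y i (z j))]
  calc _ = ∑ i ∈ s, ∑ j ∈ s, ((if i = j then 2 / 5 * (a i * b j) else 0) -
        |a i| * (2⁻¹ : ℝ) ^ (i + 1) * (|b j| * (2⁻¹ : ℝ) ^ (j + 1)) / 100) := by
        rw [Finset.sum_mul_sum]
        simp [Finset.sum_sub_distrib, Finset.sum_div, Finset.mul_sum]
    _ ≤ ∑ i ∈ s, ∑ j ∈ s, a i * b j * y i (z j) :=
        Finset.sum_le_sum fun i _ => Finset.sum_le_sum fun j _ => hterm i j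
    _ = _ := (apply_sum_smul_sum_smul y z s a b).symm

theorem lower_estimate (h : IsAlmostBiorthogonal y z) {q q' K : ℝ}
    (hqq' : q.HolderConjugate q')
    (hz : ∀ (s : Finset ℕ) (b : ℕ → ℝ),
      ‖∑ i ∈ s, b i • z i‖ ≤ K * (∑ i ∈ s, |b i| ^ q) ^ (1 / q))
    (s : Finset ℕ) (a : ℕ → ℝ) :
    (4 * K)⁻¹ * (∑ i ∈ s, |a i| ^ q') ^ (1 / q') ≤ ‖∑ i ∈ s, a i • y i‖ := by
  set S := ∑ i ∈ s, |a i| ^ q'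
  have hS : 0 ≤ S := Finset.sum_nonneg fun i _ => Real.rpow_nonneg (abs_nonneg _) _
  rcases hS.eq_or_lt with hS0 | hSpos
  · rw [← hS0, Real.zero_rpow hqq'.symm.one_div_ne_zero, mul_zero]
    exact norm_nonneg _
  choose b hab hb using fun i => exists_mul_eq_abs_rpow_of_holderConjugate hqq'.symm (a i)
  have hSb : ∑ i ∈ s, |b i| ^ q = S := Finset.sum_congr rfl fun i _ => hb i
  have hsplit : S = S ^ (1 / q') * S ^ (1 / q) := by
    rw [← Real.rpow_add hSpos, one_div, one_div, hqq'.symm.inv_add_inv_eq_one, Real.rpow_one]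
  have hlower : S / 4 ≤ (∑ i ∈ s, a i • y i) (∑ j ∈ s, b j • z j) := by
    have hpair := h.le_apply_sum s (b := b) fun i =>
      (hab i).symm ▸ Real.rpow_nonneg (abs_nonneg _) _
    have hcross := mul_le_mul (sum_abs_mul_two_inv_pow_le hqq'.symm.pos s a)
      (sum_abs_mul_two_inv_pow_le hqq'.pos s b) (by positivity) (by positivity)
    rw [hSb, ← hsplit] at hcross
    simp only [hab] at hpair
    linarith
  have hupper : (∑ i ∈ s, a i • y i) (∑ j ∈ s, b j • z j) ≤
      ‖∑ i ∈ s, a i • y i‖ * (K * S ^ (1 / q)) :=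
    (le_abs_self _).trans <| ((∑ i ∈ s, a i • y i).le_opNorm _).trans <| by
      gcongr
      simpa only [hSb] using hz s b
  have hSq : 0 < S ^ (1 / q) := Real.rpow_pos_of_pos hSpos _
  have hmain : S ^ (1 / q') / 4 ≤ ‖∑ i ∈ s, a i • y i‖ * K := by
    refine le_of_mul_le_mul_right ?_ hSq
    calc S ^ (1 / q') / 4 * S ^ (1 / q) = S / 4 := by rw [div_mul_eq_mul_div, ← hsplit]
      _ ≤ ‖∑ i ∈ s, a i • y i‖ * K * S ^ (1 / q) := by linarith
  have hK : 0 < K := by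
    have : 0 < ‖∑ i ∈ s, a i • y i‖ * K :=
      (div_pos (Real.rpow_pos_of_pos hSpos _) four_pos).trans_le hmain
    exact pos_of_mul_pos_right this (norm_nonneg _)
  rw [mul_inv, mul_comm (4 : ℝ)⁻¹, mul_assoc, inv_mul_le_iff₀ hK]
  linarith

end IsAlmostBiorthogonal

theorem _root_.List.IsChain.append_singleton_of_forall_lt {L : List ℕ} {k : ℕ}
    (hL : L.IsChain (· < ·)) (hk : ∀ a ∈ L, a < k) : (L ++ [k]).IsChain (· < ·) :=
  hL.append (List.isChain_singleton k) fun a ha b hb => by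
    obtain rfl : k = b := by simpa using hb
    exact hk a (List.mem_of_mem_getLast? ha)

section PathState

variable {α : Type*} (step : List α → ℕ → α)

/-- The labels met along `l` when the label of the `n`-th child of a node is `step s n`, `s`
being the labels met on the way to that node. -/
def pathState (l : List ℕ) : List α :=
  l.foldl (fun s n => s ++ [step s n]) []

theorem pathState_append_singleton (l : List ℕ) (n : ℕ) :
    pathState step (l ++ [n]) = pathState step l ++ [step (pathState step l) n] := by
  simp [pathState]

theorem pathState_range_map (φ : ℕ → ℕ) (i : ℕ) :
    pathState step ((List.range i).map φ) =
      (List.range i).map fun j => step (pathState step ((List.range j).map φ)) (φ j) := by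
  induction i with
  | zero => rfl
  | succ i ih => rw [List.range_succ, List.map_append, List.map_append, List.map_singleton,
      List.map_singleton, pathState_append_singleton, ← ih]

def pathTree {β : Type*} [Zero β] (step : List (ℕ × β) → ℕ → ℕ × β) (l : List ℕ) : β :=
  ((pathState step l).getLast?.map Prod.snd).getD 0

theorem pathTree_append_singleton {β : Type*} [Zero β] (step : List (ℕ × β) → ℕ → ℕ × β)
    (l : List ℕ) (n : ℕ) : pathTree step (l ++ [n]) = (step (pathState step l) n).2 := by
  simp [pathTree, pathState_append_singleton]

end PathState

def tol (k : ℕ) : ℝ := (4⁻¹ : ℝ) ^ (k + 1) / 100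

theorem tol_pos (k : ℕ) : 0 < tol k := by unfold tol; positivity

theorem tol_le {i j : ℕ} (hji : j ≤ i) :
    tol i ≤ (2⁻¹ : ℝ) ^ (i + 1) * (2⁻¹ : ℝ) ^ (j + 1) / 100 := by
  have h4 : (4⁻¹ : ℝ) = 2⁻¹ ^ 2 := by norm_num
  rw [tol, h4, ← pow_mul, ← pow_add]
  exact div_le_div_of_nonneg_right (pow_le_pow_of_le_one (by norm_num) (by norm_num) (by omega))
    (by norm_num)

/-- The requirements on the children of the node of the new tree reached along the labels `s`:
the `n`-th child is labelled `p n`, pairing an index of the next node of `xs` with a vector. -/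
structure IsGoodNode (xs : List ℕ → StrongDual ℝ X) (s : List (ℕ × X)) (p : ℕ → ℕ × X) :
    Prop where
  lt_index : ∀ n, ∀ c ∈ s, c.1 < (p n).1
  norm_eq : ∀ n, ‖(p n).2‖ = 1
  diag : ∀ n, 2 / 5 ≤ xs (s.map Prod.fst ++ [(p n).1]) (p n).2
  small_left : ∀ n, ∀ j < s.length,
    |xs ((s.map Prod.fst).take (j + 1)) (p n).2| ≤ tol s.length
  small_right : ∀ n, ∀ c ∈ s, |xs (s.map Prod.fst ++ [(p n).1]) c.2| ≤ tol s.length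
  weaklyNull : ∀ g : StrongDual ℝ X, Tendsto (fun n => g (p n).2) atTop (𝓝 0)

section PathTree

variable {xs : List ℕ → StrongDual ℝ X} {step : List (ℕ × X) → ℕ → ℕ × X}

theorem isGoodNode_pathState
    (hstep : ∀ s, (s.map Prod.fst).IsChain (· < ·) → IsGoodNode xs s (step s)) (l : List ℕ) :
    IsGoodNode xs (pathState step l) (step (pathState step l)) := by
  apply hstep
  induction l using List.reverseRecOn with
  | nil => exact List.isChain_nil
  | append_singleton l n ih =>
    rw [pathState_append_singleton, List.map_append, List.map_singleton]
    exact ih.append_singleton_of_forall_lt fun a ha => by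
      obtain ⟨c, hc, rfl⟩ := List.mem_map.1 ha
      exact (hstep _ ih).lt_index n c hc

theorem treeInSphere_pathTree
    (hgood : ∀ l, IsGoodNode xs (pathState step l) (step (pathState step l))) :
    TreeInSphere (pathTree step) := by
  intro l _ hl
  obtain ⟨l, n, rfl⟩ := (List.eq_nil_or_concat l).resolve_left hl
  rw [List.concat_eq_append, pathTree_append_singleton]
  exact (hgood l).norm_eq n

theorem isWeaklyNullTree_pathTree
    (hgood : ∀ l, IsGoodNode xs (pathState step l) (step (pathState step l))) :
    IsWeaklyNullTree (pathTree step) := fun l _ g => by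
  simpa only [pathTree_append_singleton] using (hgood l).weaklyNull g

theorem exists_isAlmostBiorthogonal_branch
    (hgood : ∀ l, IsGoodNode xs (pathState step l) (step (pathState step l))) (φ : ℕ → ℕ) :
    ∃ ψ : ℕ → ℕ, StrictMono ψ ∧
      IsAlmostBiorthogonal (branchOf xs ψ) (branchOf (pathTree step) φ) := by
  set P : ℕ → ℕ × X := fun i => step (pathState step ((List.range i).map φ)) (φ i)
  have hstate : ∀ i, pathState step ((List.range i).map φ) = (List.range i).map P :=
    pathState_range_map step φ
  have hnode : ∀ i, IsGoodNode xs ((List.range i).map P) (step ((List.range i).map P)) :=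
    fun i => hstate i ▸ hgood _
  have hP : ∀ i, step ((List.range i).map P) (φ i) = P i := fun i => by rw [← hstate]
  have hz : ∀ i, branchOf (pathTree step) φ i = (P i).2 := fun i => by
    rw [branchOf, List.range_succ, List.map_append, List.map_singleton, pathTree_append_singleton]
  have hy : ∀ i, branchOf xs (fun i => (P i).1) i =
      xs (((List.range i).map P).map Prod.fst ++ [(P i).1]) := fun i => by
    rw [branchOf, List.range_succ, List.map_append, List.map_singleton, List.map_map]
    rfl
  have hy' : ∀ i j, i < j → branchOf xs (fun i => (P i).1) i =
      xs ((((List.range j).map P).map Prod.fst).take (i + 1)) := fun i j hij => by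
    rw [branchOf, List.map_map, ← List.map_take, List.take_range, min_eq_left (by omega)]
    rfl
  refine ⟨fun i => (P i).1, fun j i hji => ?_, ⟨fun i => ?_, fun i j hij => ?_⟩⟩
  · show (P j).1 < (P i).1
    rw [← hP i]
    exact (hnode i).lt_index _ _ (List.mem_map_of_mem (List.mem_range.2 hji))
  · rw [hy, hz, ← hP i]
    exact (hnode i).diag _
  · rcases lt_or_gt_of_ne hij with h | h
    · rw [hy' i j h, hz, ← hP j]
      refine ((hnode j).small_left _ i (by simpa using h)).trans ?_
      simpa only [List.length_map, List.length_range, mul_comm] using tol_le h.le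
    · rw [hy, hz, ← hP i]
      refine ((hnode i).small_right _ (P j) (List.mem_map_of_mem (List.mem_range.2 h))).trans ?_
      simpa using tol_le h.le

end PathTree

section Separable

variable [TopologicalSpace.SeparableSpace (StrongDual ℝ X)]

theorem exists_strictMono_tendsto_apply {u : ℕ → X} {M : ℝ} (hu : ∀ n, ‖u n‖ ≤ M) :
    ∃ (σ : ℕ → ℕ) (Φ : StrongDual ℝ X → ℝ), StrictMono σ ∧
      ∀ g : StrongDual ℝ X, Tendsto (fun t => g (u (σ t))) atTop (𝓝 (Φ g)) := by
  let ι := NormedSpace.inclusionInDoubleDual ℝ X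
  have hmem : ∀ n, ι (u n) ∈ Metric.closedBall 0 M := fun n =>
    (dist_zero_right (ι (u n))).trans_le ((NormedSpace.double_dual_bound ℝ X (u n)).trans (hu n))
  obtain ⟨Φ, -, σ, hσ, hΦ⟩ :=
    WeakDual.isSeqCompact_closedBall ℝ (StrongDual ℝ X) 0 M (x := fun n => ι (u n)) hmem
  exact ⟨σ, Φ, hσ, fun g => ((WeakDual.eval_continuous g).tendsto Φ).comp hΦ⟩

theorem exists_weaklyNull_le_apply {f : ℕ → StrongDual ℝ X} (hf : ∀ n, ‖f n‖ = 1)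
    (hfw : ∀ v, Tendsto (fun n => f n v) atTop (𝓝 0)) :
    ∃ (κ : ℕ → ℕ) (w : ℕ → X), Tendsto κ atTop atTop ∧ (∀ n, ‖w n‖ = 1) ∧
      (∀ n, 2 / 5 ≤ f (κ n) (w n)) ∧
      ∀ g : StrongDual ℝ X, Tendsto (fun n => g (w n)) atTop (𝓝 0) := by
  choose u hu hfu using fun n =>
    exists_norm_le_one_lt_apply (f n) (r := 9 / 10) (by rw [hf]; norm_num)
  obtain ⟨σ, Φ, hσ, hΦ⟩ := exists_strictMono_tendsto_apply hu
  have hlate : ∀ n, ∃ t, n ≤ t ∧ f (σ t) (u (σ n)) < 1 / 10 := fun n =>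
    ((eventually_ge_atTop n).and <| ((hfw (u (σ n))).comp hσ.tendsto_atTop).eventually <|
      gt_mem_nhds (by norm_num)).exists
  choose t hnt ht using hlate
  have ht_tendsto : Tendsto t atTop atTop := tendsto_atTop_mono hnt tendsto_id
  set d : ℕ → X := fun n => u (σ (t n)) - u (σ n)
  have hfd : ∀ n, 4 / 5 ≤ f (σ (t n)) (d n) := fun n => by
    have := hfu (σ (t n))
    have := ht n
    simp only [d, map_sub]
    linarith
  have hd_ge : ∀ n, 4 / 5 ≤ ‖d n‖ := fun n => by
    have := (le_abs_self _).trans ((f (σ (t n))).le_opNorm (d n))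
    rw [hf, one_mul] at this
    exact (hfd n).trans this
  have hd_le : ∀ n, ‖d n‖ ≤ 2 := fun n =>
    (norm_sub_le _ _).trans (by linarith [hu (σ (t n)), hu (σ n)])
  have hd_null : ∀ g : StrongDual ℝ X, Tendsto (fun n => g (d n)) atTop (𝓝 0) := fun g => by
    simpa [d] using ((hΦ g).comp ht_tendsto).sub (hΦ g)
  have hd_ne : ∀ n, d n ≠ 0 := fun n h => by
    have := hd_ge n
    rw [h, norm_zero] at this
    norm_num at this
  refine ⟨fun n => σ (t n), fun n => ‖d n‖⁻¹ • d n, hσ.tendsto_atTop.comp ht_tendsto,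
    fun n => norm_smul_inv_norm (hd_ne n), fun n => ?_, fun g => ?_⟩
  · rw [map_smul, smul_eq_mul, le_inv_mul_iff₀ ((norm_pos_iff.2 (hd_ne n)))]
    linarith [hfd n, hd_le n]
  · refine squeeze_zero_norm (a := fun n => 5 / 4 * ‖g (d n)‖) (fun n => ?_) ?_
    · rw [map_smul, norm_smul, norm_inv, norm_norm]
      gcongr
      rw [inv_le_comm₀ (norm_pos_iff.2 (hd_ne n)) (by norm_num)]
      linarith [hd_ge n]
    · simpa using ((hd_null g).norm.const_mul (5 / 4 : ℝ))

theorem exists_weaklyNull_le_apply_of_finset {f : ℕ → StrongDual ℝ X} (hf : ∀ n, ‖f n‖ = 1)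
    (hfw : ∀ v, Tendsto (fun n => f n v) atTop (𝓝 0)) (G : Finset (StrongDual ℝ X))
    (V : Finset X) {η : ℝ} (hη : 0 < η) :
    ∃ (κ : ℕ → ℕ) (w : ℕ → X), (∀ n, ‖w n‖ = 1) ∧ (∀ n, 2 / 5 ≤ f (κ n) (w n)) ∧
      (∀ n, ∀ g ∈ G, |g (w n)| ≤ η) ∧ (∀ n, ∀ v ∈ V, |f (κ n) v| ≤ η) ∧
      ∀ g : StrongDual ℝ X, Tendsto (fun n => g (w n)) atTop (𝓝 0) := by
  obtain ⟨κ, w, hκ, hw1, hfw2, hw⟩ := exists_weaklyNull_le_apply hf hfw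
  have small : ∀ {a : ℕ → ℝ}, Tendsto a atTop (𝓝 0) → ∀ᶠ n in atTop, |a n| ≤ η := fun ha =>
    (tendsto_zero_iff_abs_tendsto_zero _).1 ha |>.eventually (ge_mem_nhds hη)
  obtain ⟨N, hN⟩ := eventually_atTop.1 <|
    (G.eventually_all.2 fun g _ => small (hw g)).and
      (V.eventually_all.2 fun v _ => small ((hfw v).comp hκ))
  exact ⟨fun n => κ (n + N), fun n => w (n + N), fun n => hw1 _, fun n => hfw2 _,
    fun n => (hN _ (Nat.le_add_left N n)).1, fun n => (hN _ (Nat.le_add_left N n)).2,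
    fun g => (hw g).comp (tendsto_add_atTop_nat N)⟩

theorem exists_isGoodNode {xs : List ℕ → StrongDual ℝ X} (hsph : TreeInSphere xs)
    (hnull : IsWStarNullDualTree xs) (s : List (ℕ × X)) (hs : (s.map Prod.fst).IsChain (· < ·)) :
    ∃ p, IsGoodNode xs s p := by
  classical
  set L := s.map Prod.fst
  set m := L.sum
  have hchain : ∀ n, (L ++ [n + (m + 1)]).IsChain (· < ·) := fun n =>
    hs.append_singleton_of_forall_lt fun a ha => by
      have : a ≤ m := List.le_sum_of_mem ha
      omega
  obtain ⟨κ, w, hw1, hdiag, hG, hV, hw⟩ := exists_weaklyNull_le_apply_of_finset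
    (f := fun n => xs (L ++ [n + (m + 1)])) (fun n => hsph _ (hchain n) (by simp))
    (fun v => (hnull L hs v).comp (tendsto_add_atTop_nat (m + 1)))
    ((Finset.range s.length).image fun j => xs (L.take (j + 1))) (s.map Prod.snd).toFinset
    (tol_pos s.length)
  refine ⟨fun n => (κ n + (m + 1), w n), ⟨fun n c hc => ?_, hw1, hdiag, fun n j hj => ?_,
    fun n c hc => ?_, hw⟩⟩
  · have : c.1 ≤ m := List.le_sum_of_mem (List.mem_map_of_mem hc)
    show c.1 < κ n + (m + 1)
    omega
  · exact hG n _ (Finset.mem_image_of_mem _ (Finset.mem_range.2 hj))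
  · exact hV n _ (List.mem_toFinset.2 (List.mem_map_of_mem hc))

theorem exists_weaklyNull_tree_isAlmostBiorthogonal {xs : List ℕ → StrongDual ℝ X}
    (hsph : TreeInSphere xs) (hnull : IsWStarNullDualTree xs) :
    ∃ z : List ℕ → X, TreeInSphere z ∧ IsWeaklyNullTree z ∧ ∀ φ : ℕ → ℕ, ∃ ψ : ℕ → ℕ,
      StrictMono ψ ∧ IsAlmostBiorthogonal (branchOf xs ψ) (branchOf z φ) := by
  have hnode : ∀ s : List (ℕ × X), ∃ p : ℕ → ℕ × X,
      (s.map Prod.fst).IsChain (· < ·) → IsGoodNode xs s p := fun s => by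
    by_cases hs : (s.map Prod.fst).IsChain (· < ·)
    · exact (exists_isGoodNode hsph hnull s hs).imp fun _ hp _ => hp
    · exact ⟨0, fun h => absurd h hs⟩
  choose step hstep using hnode
  have hgood := isGoodNode_pathState hstep
  exact ⟨pathTree step, treeInSphere_pathTree hgood, isWeaklyNullTree_pathTree hgood,
    exists_isAlmostBiorthogonal_branch hgood⟩

end Separable

end

theorem statement9_general {X : Type*} [NormedAddCommGroup X] [NormedSpace ℝ X]
    (hsep : TopologicalSpace.SeparableSpace (StrongDual ℝ X))
    (q q' K : ℝ) (hq : 1 < q) (hq' : 1 / q + 1 / q' = 1)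
    (htree : TreeUpperEst X (ENNReal.ofReal q) K) :
    DualTreeLowerWStarEst X (ENNReal.ofReal q') (4 * K) := by
  intro xs hsph hnull
  have hqq' : q.HolderConjugate q' :=
    Real.holderConjugate_iff.2 ⟨hq, by simpa only [one_div] using hq'⟩
  obtain ⟨z, hzsph, hznull, hbranch⟩ := exists_weaklyNull_tree_isAlmostBiorthogonal hsph hnull
  obtain ⟨φ, -, hφ⟩ := htree z hzsph hznull
  obtain ⟨ψ, hψ, hyz⟩ := hbranch φ
  refine ⟨ψ, hψ, fun s a => ?_⟩
  rw [lpSumOn_ofReal hqq'.symm.nonneg]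
  exact hyz.lower_estimate hqq'
    (fun s b => by simpa only [lpSumOn_ofReal hqq'.nonneg] using hφ s b) s a

/-- **Lemma 3.5** (Odell–Schlumprecht).  Let `X` have separable dual and `q > 1`.  If
`X` satisfies `K`-`(∞,q)`-tree estimates, then `X^*` satisfies `(q',1)`-w*-tree
estimates with constant `4K`, where `1/q + 1/q' = 1`:  every w*-null tree in `S_{X^*}`
admits a branch `(xᵢ^*)` with `‖∑ aᵢ xᵢ^*‖ ≥ (4K)⁻¹ (∑ |aᵢ|^{q'})^{1/q'}`. -/
theorem statement9 {X : Type*} [NormedAddCommGroup X] [NormedSpace ℝ X] [CompleteSpace X]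
    (hsep : TopologicalSpace.SeparableSpace (StrongDual ℝ X))
    (q q' K : ℝ) (hq : 1 < q) (hq' : 1 / q + 1 / q' = 1) (hK : 0 < K)
    (htree : TreeUpperEst X (ENNReal.ofReal q) K) :
    DualTreeLowerWStarEst X (ENNReal.ofReal q') (4 * K) :=
  statement9_general hsep q q' K hq hq' htree

end OS

end
end

section
/- Let 1 ≤ q ≤ p ≤ ∞ and let F and G be finite dimensional normed spaces with norms ‖·‖_F and ‖·‖_G. Let |||·||| be a norm on F ⊕ G such that the two-term FDD (F,G) satisfies 1-(p,q)-estimates in (F ⊕ G, |||·|||), and assume there are 1 < c < d < ∞ with c‖f‖_F ≤ |||f||| ≤ d‖f‖_F for all f ∈ F and c‖g‖_G ≤ |||g||| ≤ d‖g‖_G for all g ∈ G. Then there is a norm ‖·‖ on F ⊕ G extending ‖·‖_F and ‖·‖_G such that (F,G) satisfies 1-(p,q)-estimates in (F ⊕ G, ‖·‖) and c‖f+g‖ ≤ |||f+g||| ≤ d‖f+g‖ for all f ∈ F, g ∈ G. -/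
/-! Common definitions for formalizing results of
E. Odell and Th. Schlumprecht,
"Embedding into Banach spaces with finite dimensional decompositions". -/

open Filter Topology
open scoped ENNReal NNReal

noncomputable section

namespace OS

/-! The new norm is `‖w‖ = max (|||w||| / d) ‖w‖_p`, where `‖(f, g)‖_p = lp2 p ‖f‖_F ‖g‖_G` is
the `ℓ_p`-sum of the given norms. Since `|||f||| ≤ d ‖f‖_F`, the first term never exceeds the
second on `F` or on `G`, so `‖·‖` extends `‖·‖_F` and `‖·‖_G`. The `ℓ_p`-term gives the lower
`p`-estimate, and the upper `q`-estimate for `|||·|||` together with `|||·||| ≤ d ‖·‖` on `F`,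
`G` bounds `|||·||| / d` by the `ℓ_q`-sum, which dominates the `ℓ_p`-sum as `q ≤ p`. Finally
`c ≤ d` and `c ‖·‖ ≤ |||·|||` on `F`, `G` give `c ‖·‖ ≤ |||·|||`. -/

section Lp2

variable {r r' : ℝ≥0∞} {s t s' t' : ℝ}

lemma lp2_top (s t : ℝ) : lp2 ⊤ s t = max s t := if_pos rfl

lemma lp2_of_ne_top (hr : r ≠ ⊤) (hs : 0 ≤ s) (ht : 0 ≤ t) :
    lp2 r s t = (s ^ r.toReal + t ^ r.toReal) ^ (1 / r.toReal) := by
  simp [lp2, hr, abs_of_nonneg hs, abs_of_nonneg ht]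

lemma lp2_le_lp2 (hr : 0 < r) (hs : 0 ≤ s) (ht : 0 ≤ t) (hss' : s ≤ s') (htt' : t ≤ t') :
    lp2 r s t ≤ lp2 r s' t' := by
  by_cases hrt : r = ⊤
  · subst hrt
    simpa only [lp2_top] using max_le_max hss' htt'
  have hr0 : 0 < r.toReal := ENNReal.toReal_pos hr.ne' hrt
  rw [lp2_of_ne_top hrt hs ht, lp2_of_ne_top hrt (hs.trans hss') (ht.trans htt')]
  gcongr

lemma lp2_mul (hr : 0 < r) {k : ℝ} (hk : 0 ≤ k) (hs : 0 ≤ s) (ht : 0 ≤ t) :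
    lp2 r (k * s) (k * t) = k * lp2 r s t := by
  by_cases hrt : r = ⊤
  · subst hrt
    simp only [lp2_top, mul_max_of_nonneg _ _ hk]
  have hr0 : 0 < r.toReal := ENNReal.toReal_pos hr.ne' hrt
  rw [lp2_of_ne_top hrt (mul_nonneg hk hs) (mul_nonneg hk ht), lp2_of_ne_top hrt hs ht,
    Real.mul_rpow hk hs, Real.mul_rpow hk ht, ← mul_add, Real.mul_rpow (by positivity)
    (by positivity), one_div, Real.rpow_rpow_inv hk hr0.ne']

lemma le_lp2 (hr : 0 < r) (hs : 0 ≤ s) (ht : 0 ≤ t) : s ≤ lp2 r s t := by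
  by_cases hrt : r = ⊤
  · subst hrt
    exact (le_max_left s t).trans_eq (lp2_top s t).symm
  have hr0 : 0 < r.toReal := ENNReal.toReal_pos hr.ne' hrt
  calc s = (s ^ r.toReal) ^ (1 / r.toReal) := by rw [one_div, Real.rpow_rpow_inv hs hr0.ne']
    _ ≤ lp2 r s t := by
      rw [lp2_of_ne_top hrt hs ht]
      gcongr
      exact le_add_of_nonneg_right (by positivity)

lemma mul_lp2_le_lp2 (hr : 0 < r) {k : ℝ} (hk : 0 ≤ k) (hs : 0 ≤ s) (ht : 0 ≤ t)
    (hss' : k * s ≤ s') (htt' : k * t ≤ t') : k * lp2 r s t ≤ lp2 r s' t' :=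
  (lp2_mul hr hk hs ht).symm.trans_le
    (lp2_le_lp2 hr (mul_nonneg hk hs) (mul_nonneg hk ht) hss' htt')

lemma lp2_le_mul_lp2 (hr : 0 < r) {k : ℝ} (hk : 0 ≤ k) (hs : 0 ≤ s) (ht : 0 ≤ t)
    (hs' : 0 ≤ s') (ht' : 0 ≤ t') (hss' : s' ≤ k * s) (htt' : t' ≤ k * t) :
    lp2 r s' t' ≤ k * lp2 r s t :=
  (lp2_le_lp2 hr hs' ht' hss' htt').trans_eq (lp2_mul hr hk hs ht)

lemma lp2_comm (s t : ℝ) : lp2 r s t = lp2 r t s := by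
  unfold lp2
  split_ifs
  · exact max_comm s t
  · rw [add_comm]

lemma lp2_antitone_exponent (hr : 0 < r) (hrr' : r ≤ r') (hs : 0 ≤ s) (ht : 0 ≤ t) :
    lp2 r' s t ≤ lp2 r s t := by
  by_cases hrt : r = ⊤
  · subst hrt
    rw [top_le_iff.mp hrr']
  by_cases hrt' : r' = ⊤
  · subst hrt'
    rw [lp2_top]
    exact max_le (le_lp2 hr hs ht) (lp2_comm t s ▸ le_lp2 hr ht hs)
  rw [lp2_of_ne_top hrt hs ht, lp2_of_ne_top hrt' hs ht]
  exact Real.rpow_add_rpow_le hs ht (ENNReal.toReal_pos hr.ne' hrt)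
    (ENNReal.toReal_mono hrt' hrr')

lemma lp2_norm_eq_norm_toLp (p : ℝ≥0∞) [Fact (1 ≤ p)] {α β : Type*}
    [SeminormedAddCommGroup α] [SeminormedAddCommGroup β] (x : α) (y : β) :
    lp2 p ‖x‖ ‖y‖ = ‖WithLp.toLp p (x, y)‖ := by
  by_cases hpt : p = ⊤
  · subst hpt
    rw [lp2_top, WithLp.prod_norm_eq_sup]
    rfl
  have hp0 : 0 < p.toReal := ENNReal.toReal_pos (zero_lt_one.trans_le Fact.out).ne' hpt
  rw [lp2_of_ne_top hpt (norm_nonneg x) (norm_nonneg y), WithLp.prod_norm_eq_add hp0]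
  rfl

end Lp2

namespace IsNormOn

variable {W : Type*} [AddCommGroup W] [Module ℝ W] {N N' : W → ℝ}

lemma nonneg (hN : IsNormOn W N) (w : W) : 0 ≤ N w := by
  rcases eq_or_ne w 0 with rfl | hw
  · exact hN.zero.ge
  · exact (hN.pos w hw).le

lemma div_const (hN : IsNormOn W N) {d : ℝ} (hd : 0 < d) : IsNormOn W fun w => N w / d where
  pos w hw := div_pos (hN.pos w hw) hd
  zero := by simp [hN.zero]
  smul a w := by rw [hN.smul, mul_div_assoc]
  add w w' := by rw [← add_div]; gcongr; exact hN.add w w'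

lemma max (hN : IsNormOn W N) (hN' : IsNormOn W N') : IsNormOn W fun w => max (N w) (N' w) where
  pos w hw := lt_max_of_lt_left (hN.pos w hw)
  zero := by simp [hN.zero, hN'.zero]
  smul a w := by rw [hN.smul, hN'.smul, mul_max_of_nonneg _ _ (abs_nonneg a)]
  add w w' := max_le ((hN.add w w').trans (add_le_add (le_max_left _ _) (le_max_left _ _)))
    ((hN'.add w w').trans (add_le_add (le_max_right _ _) (le_max_right _ _)))

lemma comp_linearEquiv {V : Type*} [AddCommGroup V] [Module ℝ V] {N : V → ℝ}
    (hN : IsNormOn V N) (e : W ≃ₗ[ℝ] V) : IsNormOn W fun w => N (e w) where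
  pos w hw := hN.pos _ (e.map_ne_zero_iff.mpr hw)
  zero := by rw [map_zero, hN.zero]
  smul a w := by rw [map_smul, hN.smul]
  add w w' := by rw [map_add]; exact hN.add _ _

end IsNormOn

lemma isNormOn_norm (V : Type*) [NormedAddCommGroup V] [NormedSpace ℝ V] : IsNormOn V norm where
  pos _ := norm_pos_iff.mpr
  zero := norm_zero
  smul a w := by rw [norm_smul, Real.norm_eq_abs]
  add := norm_add_le

lemma isNormOn_norm_toLp (p : ℝ≥0∞) [Fact (1 ≤ p)] (F G : Type*) [NormedAddCommGroup F]
    [NormedSpace ℝ F] [NormedAddCommGroup G] [NormedSpace ℝ G] :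
    IsNormOn (F × G) fun w => ‖WithLp.toLp p w‖ :=
  (isNormOn_norm _).comp_linearEquiv (WithLp.linearEquiv p ℝ (F × G)).symm

theorem statement17_general (p q : ℝ≥0∞) (hq : 1 ≤ q) (hqp : q ≤ p)
    {F G : Type*} [NormedAddCommGroup F] [NormedSpace ℝ F]
    [NormedAddCommGroup G] [NormedSpace ℝ G]
    (T : F × G → ℝ) (hT : IsNormOn (F × G) T)
    (hpqest : ∀ (f : F) (g : G),
      lp2 p (T (f, 0)) (T (0, g)) ≤ T (f, g) ∧ T (f, g) ≤ lp2 q (T (f, 0)) (T (0, g)))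
    (c d : ℝ) (hc : 1 < c) (hcd : c < d)
    (hF : ∀ f : F, c * ‖f‖ ≤ T (f, 0) ∧ T (f, 0) ≤ d * ‖f‖)
    (hG : ∀ g : G, c * ‖g‖ ≤ T (0, g) ∧ T (0, g) ≤ d * ‖g‖) :
    ∃ N : F × G → ℝ, IsNormOn (F × G) N ∧
      (∀ f : F, N (f, 0) = ‖f‖) ∧ (∀ g : G, N (0, g) = ‖g‖) ∧
      (∀ (f : F) (g : G),
        lp2 p (N (f, 0)) (N (0, g)) ≤ N (f, g) ∧ N (f, g) ≤ lp2 q (N (f, 0)) (N (0, g))) ∧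
      ∀ w : F × G, c * N w ≤ T w ∧ T w ≤ d * N w := by
  have : Fact (1 ≤ p) := ⟨hq.trans hqp⟩
  have hq0 : 0 < q := zero_lt_one.trans_le hq
  have hc0 : 0 < c := zero_lt_one.trans hc
  have hd0 : 0 < d := hc0.trans hcd
  have hT_le (f : F) (g : G) : T (f, g) ≤ d * lp2 q ‖f‖ ‖g‖ :=
    (hpqest f g).2.trans (lp2_le_mul_lp2 hq0 hd0.le (norm_nonneg f) (norm_nonneg g)
      (hT.nonneg _) (hT.nonneg _) (hF f).2 (hG g).2)
  have hT_ge (f : F) (g : G) : c * lp2 p ‖f‖ ‖g‖ ≤ T (f, g) :=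
    (mul_lp2_le_lp2 (hq0.trans_le hqp) hc0.le (norm_nonneg f) (norm_nonneg g)
      (hF f).1 (hG g).1).trans (hpqest f g).1
  set N : F × G → ℝ := fun w => max (T w / d) ‖WithLp.toLp p w‖ with hN
  have hNF (f : F) : N (f, 0) = ‖f‖ := by simpa [N, div_le_iff₀' hd0] using (hF f).2
  have hNG (g : G) : N (0, g) = ‖g‖ := by simpa [N, div_le_iff₀' hd0] using (hG g).2
  refine ⟨N, (hT.div_const hd0).max (isNormOn_norm_toLp p F G), hNF, hNG, fun f g => ?_,
    fun w => ⟨?_, (div_le_iff₀' hd0).mp (le_max_left _ _)⟩⟩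
  · rw [hNF, hNG, lp2_norm_eq_norm_toLp]
    refine ⟨le_max_right _ _, max_le ((div_le_iff₀' hd0).mpr (hT_le f g)) ?_⟩
    rw [← lp2_norm_eq_norm_toLp]
    exact lp2_antitone_exponent hq0 hqp (norm_nonneg f) (norm_nonneg g)
  · rw [hN, mul_max_of_nonneg _ _ hc0.le, ← lp2_norm_eq_norm_toLp]
    refine max_le ?_ (hT_ge w.1 w.2)
    rw [mul_div_assoc', div_le_iff₀ hd0, mul_comm]
    exact mul_le_mul_of_nonneg_left hcd.le (hT.nonneg w)

/-- **Lemma 5.1** (Odell–Schlumprecht).  Let `1 ≤ q ≤ p ≤ ∞` and let `F`, `G` be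
finite dimensional normed spaces.  Let `|||·|||` (here `T`) be a norm on `F ⊕ G` for
which the two-term FDD `(F, G)` satisfies `1`-`(p,q)`-estimates, and suppose
`c ‖f‖_F ≤ |||f||| ≤ d ‖f‖_F` and `c ‖g‖_G ≤ |||g||| ≤ d ‖g‖_G` for some
`1 < c < d < ∞`.  Then there is a norm `‖·‖` (here `N`) on `F ⊕ G` extending `‖·‖_F`
and `‖·‖_G`, for which `(F, G)` satisfies `1`-`(p,q)`-estimates and
`c ‖f+g‖ ≤ |||f+g||| ≤ d ‖f+g‖`. -/
theorem statement17 (p q : ℝ≥0∞) (hq : 1 ≤ q) (hqp : q ≤ p)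
    {F G : Type*} [NormedAddCommGroup F] [NormedSpace ℝ F] [FiniteDimensional ℝ F]
    [NormedAddCommGroup G] [NormedSpace ℝ G] [FiniteDimensional ℝ G]
    (T : F × G → ℝ) (hT : IsNormOn (F × G) T)
    (hpqest : ∀ (f : F) (g : G),
      lp2 p (T (f, 0)) (T (0, g)) ≤ T (f, g) ∧ T (f, g) ≤ lp2 q (T (f, 0)) (T (0, g)))
    (c d : ℝ) (hc : 1 < c) (hcd : c < d)
    (hF : ∀ f : F, c * ‖f‖ ≤ T (f, 0) ∧ T (f, 0) ≤ d * ‖f‖)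
    (hG : ∀ g : G, c * ‖g‖ ≤ T (0, g) ∧ T (0, g) ≤ d * ‖g‖) :
    ∃ N : F × G → ℝ, IsNormOn (F × G) N ∧
      (∀ f : F, N (f, 0) = ‖f‖) ∧ (∀ g : G, N (0, g) = ‖g‖) ∧
      (∀ (f : F) (g : G),
        lp2 p (N (f, 0)) (N (0, g)) ≤ N (f, g) ∧ N (f, g) ≤ lp2 q (N (f, 0)) (N (0, g))) ∧
      ∀ w : F × G, c * N w ≤ T w ∧ T w ≤ d * N w :=
  statement17_general p q hq hqp T hT hpqest c d hc hcd hF hG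

end OS

end
end
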